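/- arXiv:2602.21032 — 9 statements merged into one kernel-verified Lean document; each statement's English description precedes it below -/
import Mathlib

section
/- Let A be a finite abelian group and n a positive integer. Define Δ : Hom(A ⊗ A, ℤ/n) → Hom(A ⊗ A, ℤ/n) by (Δf)(a ⊗ b) = f(b ⊗ a) − f(a ⊗ b). Then the image of Δ is exactly the set of alternating homomorphisms g (those with g(a ⊗ a) = 0 for all a ∈ A), and the kernel of Δ is exactly the set of symmetric homomorphisms g (those with g(a ⊗ b) = g(b ⊗ a) for all a, b ∈ A). -/
/-!
Write `Δf = f ∘ swap - f`. Clearly `Δf` vanishes on the diagonal, and `Δf = 0` says that `f` is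
symmetric. Conversely, decompose `A` into cyclic summands with projections `π i`, `∑ i, π i = 1`,
and order the index set. An alternating `g` vanishes on each block `π i a ⊗ π i b` (a cyclic
group has no nonzero alternating forms) and is antisymmetric, so expanding
`g (a ⊗ b) = ∑ i j, g (π i a ⊗ π j b)` and pairing `(i, j)` with `(j, i)` gives
`g (a ⊗ b) = F (a ⊗ b) - F (b ⊗ a)` for `F = ∑ i < j, g ∘ (π i ⊗ π j)`; hence `g = Δ(-F)`.
-/

open TensorProduct

theorem Fintype.sum_prod_eq_sum_lt_add_swap {ι M : Type*} [Fintype ι] [LinearOrder ι]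
    [AddCommMonoid M] (h : ι × ι → M) (hdiag : ∀ i, h (i, i) = 0) :
    ∑ p, h p = ∑ p : ι × ι with p.1 < p.2, (h p + h p.swap) := by
  have hswap : ∑ p : ι × ι with p.2 < p.1, h p = ∑ p : ι × ι with p.1 < p.2, h p.swap :=
    Finset.sum_equiv (Equiv.prodComm ι ι) (by simp) (by simp)
  calc ∑ p, h p
      = ∑ p, ((if p.1 < p.2 then h p else 0) + if p.2 < p.1 then h p else 0) := by
        refine Finset.sum_congr rfl fun ⟨i, j⟩ _ => ?_
        rcases lt_trichotomy i j with hlt | rfl | hgt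
        · simp [hlt, hlt.not_gt]
        · simp [hdiag]
        · simp [hgt, hgt.not_gt]
    _ = ∑ p with p.1 < p.2, h p + ∑ p with p.2 < p.1, h p := by
        rw [Finset.sum_add_distrib, Finset.sum_ite, Finset.sum_ite]
        simp
    _ = ∑ p with p.1 < p.2, (h p + h p.swap) := by
        rw [hswap, Finset.sum_add_distrib]

section Alternating

variable {R M N : Type*} [CommSemiring R] [AddCommMonoid M] [Module R M] [AddCommGroup N]
  [Module R N]

theorem comp_comm_sub_apply_tmul (f : M ⊗[R] M →ₗ[R] N) (a b : M) :
    (f ∘ₗ (TensorProduct.comm R M M).toLinearMap - f) (a ⊗ₜ b) = f (b ⊗ₜ a) - f (a ⊗ₜ b) := by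
  simp

theorem comp_comm_sub_apply_tmul_self (f : M ⊗[R] M →ₗ[R] N) (a : M) :
    (f ∘ₗ (TensorProduct.comm R M M).toLinearMap - f) (a ⊗ₜ a) = 0 := by
  rw [comp_comm_sub_apply_tmul, sub_self]

theorem comp_comm_sub_eq_zero_iff (f : M ⊗[R] M →ₗ[R] N) :
    f ∘ₗ (TensorProduct.comm R M M).toLinearMap - f = 0 ↔ ∀ a b, f (a ⊗ₜ b) = f (b ⊗ₜ a) := by
  refine ⟨fun h a b => ?_, fun h => TensorProduct.ext' fun a b => ?_⟩
  · have hab := congr($h (a ⊗ₜ b))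
    rw [comp_comm_sub_apply_tmul, LinearMap.zero_apply, sub_eq_zero] at hab
    exact hab.symm
  · rw [comp_comm_sub_apply_tmul, h, sub_self, LinearMap.zero_apply]

theorem apply_tmul_swap_of_alternating {g : M ⊗[R] M →ₗ[R] N} (hg : ∀ a, g (a ⊗ₜ a) = 0)
    (a b : M) : g (b ⊗ₜ a) = -g (a ⊗ₜ b) := by
  have h := hg (a + b)
  simp only [add_tmul, tmul_add, map_add, hg, zero_add, add_zero] at h
  exact eq_neg_of_add_eq_zero_left h

theorem apply_tmul_eq_zero_of_alternating_of_mem_span_singleton {g : M ⊗[R] M →ₗ[R] N}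
    (hg : ∀ a, g (a ⊗ₜ a) = 0) {u a b : M} (ha : a ∈ R ∙ u) (hb : b ∈ R ∙ u) :
    g (a ⊗ₜ b) = 0 := by
  obtain ⟨r, rfl⟩ := Submodule.mem_span_singleton.mp ha
  obtain ⟨s, rfl⟩ := Submodule.mem_span_singleton.mp hb
  rw [smul_tmul_smul, map_smul, hg, smul_zero]

theorem exists_comp_comm_sub_eq_of_sum_eq_one {ι : Type*} [Fintype ι] (π : ι → Module.End R M)
    (hπ : ∑ i, π i = 1) {g : M ⊗[R] M →ₗ[R] N} (hg : ∀ a, g (a ⊗ₜ a) = 0)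
    (hblock : ∀ i a b, g (π i a ⊗ₜ π i b) = 0) :
    ∃ f : M ⊗[R] M →ₗ[R] N, f ∘ₗ (TensorProduct.comm R M M).toLinearMap - f = g := by
  classical
  let _ : LinearOrder ι := LinearOrder.lift' _ (Fintype.equivFin ι).injective
  refine ⟨-∑ p : ι × ι with p.1 < p.2, g ∘ₗ TensorProduct.map (π p.1) (π p.2),
    TensorProduct.ext' fun a b => ?_⟩
  have hsum : ∀ x, ∑ i, π i x = x := fun x => by
    rw [← LinearMap.sum_apply, hπ, Module.End.one_apply]
  calc _ = ∑ p : ι × ι with p.1 < p.2,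
          (g (π p.1 a ⊗ₜ π p.2 b) - g (π p.1 b ⊗ₜ π p.2 a)) := by
        rw [comp_comm_sub_apply_tmul, Finset.sum_sub_distrib]
        simp only [LinearMap.neg_apply, LinearMap.sum_apply, LinearMap.comp_apply, map_tmul]
        abel
    _ = ∑ p : ι × ι with p.1 < p.2,
          (g (π p.1 a ⊗ₜ π p.2 b) + g (π p.2 a ⊗ₜ π p.1 b)) :=
        Finset.sum_congr rfl fun p _ => by
          rw [apply_tmul_swap_of_alternating hg (π p.2 a), sub_neg_eq_add]
    _ = ∑ p : ι × ι, g (π p.1 a ⊗ₜ π p.2 b) :=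
        (Fintype.sum_prod_eq_sum_lt_add_swap _ fun i => hblock i a b).symm
    _ = g (a ⊗ₜ b) := by
        conv_rhs => rw [← hsum a, ← hsum b]
        simp only [Fintype.sum_prod_type_right, sum_tmul, tmul_sum, map_sum]

end Alternating

theorem AddCommGroup.exists_sum_eq_one_mem_span_singleton (A : Type*) [AddCommGroup A]
    [Finite A] :
    ∃ (ι : Type) (_ : Fintype ι) (π : ι → Module.End ℤ A) (u : ι → A),
      ∑ i, π i = 1 ∧ ∀ i a, π i a ∈ ℤ ∙ u i := by
  classical
  obtain ⟨ι, _, m, -, ⟨φ⟩⟩ := AddCommGroup.equiv_directSum_zmod_of_finite' A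
  let e : A ≃ₗ[ℤ] DirectSum ι fun i => ZMod (m i) := φ.toIntLinearEquiv
  refine ⟨ι, inferInstance,
    fun i => e.symm.toLinearMap ∘ₗ DirectSum.lof ℤ ι _ i ∘ₗ DirectSum.component ℤ ι _ i ∘ₗ
      e.toLinearMap,
    fun i => e.symm (DirectSum.lof ℤ ι _ i 1), LinearMap.ext fun a => ?_, fun i a => ?_⟩
  · simp [LinearMap.sum_apply, ← map_sum, ← DirectSum.apply_eq_component, DirectSum.lof_eq_of,
      DirectSum.sum_univ_of]
  · refine Submodule.mem_span_singleton.mpr ⟨((e a i).cast : ℤ), ?_⟩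
    simp [← map_zsmul]
    rfl

theorem AddCommGroup.exists_comp_comm_sub_eq_iff {A N : Type*} [AddCommGroup A] [Finite A]
    [AddCommGroup N] (g : A ⊗[ℤ] A →ₗ[ℤ] N) :
    (∃ f : A ⊗[ℤ] A →ₗ[ℤ] N,
        (f ∘ₗ (TensorProduct.comm ℤ A A).toLinearMap : A ⊗[ℤ] A →ₗ[ℤ] N) - f = g) ↔
      ∀ a, g (a ⊗ₜ a) = 0 := by
  refine ⟨fun ⟨f, hf⟩ a => hf ▸ comp_comm_sub_apply_tmul_self f a, fun hg => ?_⟩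
  obtain ⟨ι, _, π, u, hπ, hu⟩ := AddCommGroup.exists_sum_eq_one_mem_span_singleton A
  exact exists_comp_comm_sub_eq_of_sum_eq_one π hπ hg fun i a b =>
    apply_tmul_eq_zero_of_alternating_of_mem_span_singleton hg (hu i a) (hu i b)

open TensorProduct in
theorem stmt_0_general (A : Type*) [AddCommGroup A] [Finite A] (n : ℕ) :
    (∀ g : A ⊗[ℤ] A →ₗ[ℤ] ZMod n,
      ((∃ f : A ⊗[ℤ] A →ₗ[ℤ] ZMod n,
          (f ∘ₗ (TensorProduct.comm ℤ A A).toLinearMap : A ⊗[ℤ] A →ₗ[ℤ] ZMod n) - f = g) ↔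
        ∀ a : A, g (a ⊗ₜ[ℤ] a) = 0)) ∧
    (∀ f : A ⊗[ℤ] A →ₗ[ℤ] ZMod n,
      ((f ∘ₗ (TensorProduct.comm ℤ A A).toLinearMap : A ⊗[ℤ] A →ₗ[ℤ] ZMod n) - f = 0 ↔
        ∀ a b : A, f (a ⊗ₜ[ℤ] b) = f (b ⊗ₜ[ℤ] a))) :=
  ⟨AddCommGroup.exists_comp_comm_sub_eq_iff, comp_comm_sub_eq_zero_iff⟩

open TensorProduct in
/-- For a finite abelian group `A` and `n > 0`, the map
`Δ : Hom(A ⊗ A, ℤ/n) → Hom(A ⊗ A, ℤ/n)`, `(Δf)(a ⊗ b) = f(b ⊗ a) − f(a ⊗ b)`,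
has image exactly the alternating homomorphisms and kernel exactly the symmetric ones. -/
theorem stmt_0 (A : Type*) [AddCommGroup A] [Finite A] (n : ℕ) (hn : 0 < n) :
    (∀ g : A ⊗[ℤ] A →ₗ[ℤ] ZMod n,
      ((∃ f : A ⊗[ℤ] A →ₗ[ℤ] ZMod n,
          (f ∘ₗ (TensorProduct.comm ℤ A A).toLinearMap : A ⊗[ℤ] A →ₗ[ℤ] ZMod n) - f = g) ↔
        ∀ a : A, g (a ⊗ₜ[ℤ] a) = 0)) ∧
    (∀ f : A ⊗[ℤ] A →ₗ[ℤ] ZMod n,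
      ((f ∘ₗ (TensorProduct.comm ℤ A A).toLinearMap : A ⊗[ℤ] A →ₗ[ℤ] ZMod n) - f = 0 ↔
        ∀ a b : A, f (a ⊗ₜ[ℤ] b) = f (b ⊗ₜ[ℤ] a))) :=
  stmt_0_general A n
end

section
/- Let A be a finite abelian group whose exponent divides n. Then the Bockstein homomorphism B : H¹(A, ℤ/n) → H²(A, ℤ/n) associated to the short exact sequence 0 → ℤ/n → ℤ/n² → ℤ/n → 0 (with the first map multiplication by n) is injective. -/
/-- Let `A` be a finite abelian group of exponent dividing `n`.  The Bockstein homomorphism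
`B : H¹(A, ℤ/n) → H²(A, ℤ/n)` for `0 → ℤ/n → ℤ/n² → ℤ/n → 0` (first map multiplication
by `n`) is injective.  Here `H¹(A,ℤ/n) = Hom(A,ℤ/n)`, and `B φ` is represented by the
2-cocycle `(a,b) ↦ (val (φ a) + val (φ b) - val (φ (a+b)))/n`; injectivity says that if
this cocycle is a coboundary then `φ = 0`. -/
theorem stmt_2 (A : Type*) [AddCommGroup A] [Finite A] (n : ℕ) (hn : 0 < n)
    (hexp : ∀ a : A, n • a = 0) (φ : A →+ ZMod n)
    (hcobound : ∃ g : A → ZMod n, ∀ a b : A,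
      ((((φ a).val + (φ b).val - (φ (a + b)).val : ℤ) / (n : ℤ) : ℤ) : ZMod n)
        = g a + g b - g (a + b)) :
    φ = 0 := by
  obtain ⟨g, hg⟩ := hcobound
  haveI : NeZero n := ⟨hn.ne'⟩
  -- the lift
  set f : A → ZMod (n * n) := fun a =>
    ((φ a).val : ZMod (n * n)) - (n : ZMod (n * n)) * ((g a).val : ZMod (n * n)) with hf
  have hadd : ∀ a b : A, f (a + b) = f a + f b := by
    intro a b
    set d : ℤ := (φ a).val + (φ b).val - (φ (a + b)).val with hd
    have hdvd : (n : ℤ) ∣ d := by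
      have : ((d : ℤ) : ZMod n) = 0 := by
        have h1 : φ (a + b) = φ a + φ b := map_add φ a b
        push_cast [hd]
        simp [ZMod.natCast_val, ZMod.cast_id, h1]
      exact (ZMod.intCast_zmod_eq_zero_iff_dvd d n).mp this
    set s : ℤ := (g a).val + (g b).val - (g (a + b)).val with hs
    have hqs : (n : ℤ) ∣ (d / n - s) := by
      have h2 : ((d / n - s : ℤ) : ZMod n) = 0 := by
        push_cast [hs]
        rw [hg a b]
        simp [ZMod.natCast_val, ZMod.cast_id]
      exact (ZMod.intCast_zmod_eq_zero_iff_dvd _ n).mp h2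
    have hdd : ((n : ℤ) * n) ∣ (d - n * s) := by
      obtain ⟨q, hq⟩ := hqs
      have hdn : d = n * (d / n) := (Int.mul_ediv_cancel' hdvd).symm
      refine ⟨q, ?_⟩
      have h3 : d - n * s = n * (d / n - s) := by linear_combination hdn
      rw [h3, hq]; ring
    have h0 : ((d - n * s : ℤ) : ZMod (n * n)) = 0 := by
      rw [ZMod.intCast_zmod_eq_zero_iff_dvd]
      exact_mod_cast hdd
    have hexpand : ((d - n * s : ℤ) : ZMod (n * n)) = f a + f b - f (a + b) := by
      push_cast [hd, hs, hf]
      ring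
    rw [hexpand] at h0
    linear_combination -h0
  let F : A →+ ZMod (n * n) := AddMonoidHom.mk' f (fun a b => hadd a b)
  ext a
  have hFa : n • F a = 0 := by
    rw [← map_nsmul, hexp a, map_zero]
  have hnn : ((n * (φ a).val : ℕ) : ZMod (n * n)) = 0 := by
    have : (n : ZMod (n * n)) * f a = 0 := by
      rw [← nsmul_eq_mul]; exact hFa
    have hself : ((n * n : ℕ) : ZMod (n * n)) = 0 := ZMod.natCast_self _
    push_cast [hf] at this ⊢
    push_cast at hself
    linear_combination this + ((g a).val : ZMod (n * n)) * hself
  have hdvd2 : n * n ∣ n * (φ a).val := (ZMod.natCast_eq_zero_iff _ _).mp hnn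
  have hdvd3 : n ∣ (φ a).val := (mul_dvd_mul_iff_left hn.ne').mp hdvd2
  have hval : (φ a).val = 0 := Nat.eq_zero_of_dvd_of_lt hdvd3 (ZMod.val_lt _)
  have : φ a = 0 := (ZMod.val_eq_zero _).mp hval
  simpa using this
end

section
/- Let n be an odd positive integer and A a finite abelian group whose exponent divides n. Then H²(A, ℤ/n) (group cohomology with trivial coefficients) is isomorphic, as an Aut(A)-module, to Hom(A, ℤ/n) × (Hom(A ⊗ A, ℤ/n) / Sym), where Sym denotes the subgroup of symmetric bilinear homomorphisms. The first factor maps in via the Bockstein homomorphism applied to H¹(A,ℤ/n) = Hom(A, ℤ/n), and the second factor maps in by regarding a bilinear form as a 2-cocycle. -/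
/-!
For a cocycle `t` put `P_t(a) = ∑_{j<n} t(a, j • a)`. If `t` is symmetric and normalized, it
defines a central extension `E_t` of `A` by `ℤ/n` in which `n • (0, a) = (P_t(a), 0)`, so `P_t`
is a homomorphism. `P_t` vanishes on coboundaries (the sum telescopes) and on bilinear forms
(`n ∣ n(n-1)/2` for odd `n`), and recovers `φ` from its Bockstein cocycle `δv / n`, `v = val ∘ φ`.

As `2` is a unit mod `n`, every cocycle `c` is symmetric up to the bilinear form
`(c(a,b) - c(b,a)) / 2`. A symmetric cocycle `s` minus the Bockstein of `P_s` has `P = 0`, so in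
its extension the lifts `(0, a)` are killed by `n`. Extending `ℤ/n ↪ ℝ/ℤ` over the extension
(`ℝ/ℤ` is divisible, hence injective) sends each lift into `ℤ/n`, which splits the extension:
the cocycle is a coboundary.
-/

namespace Stmt3

variable {A : Type*} [AddCommGroup A] {n : ℕ}

/-- group 2-cocycles of an abelian group with trivial `ℤ/n`-coefficients -/
def IsCocycle2 (c : A → A → ZMod n) : Prop :=
  ∀ a b d : A, c b d - c (a + b) d + c a (b + d) - c a b = 0

/-- group 2-coboundaries -/
def IsCoboundary2 (c : A → A → ZMod n) : Prop :=
  ∃ g : A → ZMod n, ∀ a b : A, c a b = g a + g b - g (a + b)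

/-- The 2-cocycle representing the Bockstein of `φ : A →+ ℤ/n`, for the coefficient
sequence `0 → ℤ/n → ℤ/n² → ℤ/n → 0`. -/
def bockstein (φ : A →+ ZMod n) : A → A → ZMod n :=
  fun a b => ((((φ a).val + (φ b).val - (φ (a + b)).val : ℤ) / (n : ℤ) : ℤ) : ZMod n)

/-- The combined map `Hom(A, ℤ/n) × Bilin(A, ℤ/n) → Z²(A, ℤ/n)`. -/
def Phi (φ : A →+ ZMod n) (β : A →+ A →+ ZMod n) : A → A → ZMod n :=
  fun a b => bockstein φ a b + β a b

end Stmt3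

theorem ZMod.exists_toAddCircle_eq_of_nsmul_eq_zero {n : ℕ} [NeZero n] {u : UnitAddCircle}
    (hu : n • u = 0) : ∃ x : ZMod n, ZMod.toAddCircle x = u := by
  obtain ⟨m, -, rfl⟩ := (AddCircle.nsmul_eq_zero_iff (NeZero.pos n)).1 hu
  exact ⟨m, by rw [ZMod.toAddCircle_natCast, mul_one]⟩

namespace Stmt3

open Finset

variable {A : Type*} [AddCommGroup A] {n : ℕ}

section Cocycles

variable {c d : A → A → ZMod n}

theorem IsCocycle2.apply_zero_right (hc : IsCocycle2 c) (a : A) : c a 0 = c 0 0 := by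
  have h := hc a 0 0
  simp only [add_zero] at h
  linear_combination -h

theorem IsCocycle2.apply_zero_left (hc : IsCocycle2 c) (b : A) : c 0 b = c 0 0 := by
  have h := hc 0 0 b
  simp only [zero_add] at h
  linear_combination h

theorem IsCocycle2.add (hc : IsCocycle2 c) (hd : IsCocycle2 d) :
    IsCocycle2 fun a b => c a b + d a b := fun a b e => by
  linear_combination hc a b e + hd a b e

theorem IsCocycle2.sub (hc : IsCocycle2 c) (hd : IsCocycle2 d) :
    IsCocycle2 fun a b => c a b - d a b := fun a b e => by
  linear_combination hc a b e - hd a b e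

theorem isCocycle2_bilinear (β : A →+ A →+ ZMod n) : IsCocycle2 fun a b => β a b := by
  intro a b d
  simp only [map_add, AddMonoidHom.add_apply]
  ring

theorem IsCocycle2.commutator_add_left (hc : IsCocycle2 c) (a a' b : A) :
    c (a + a') b - c b (a + a') = (c a b - c b a) + (c a' b - c b a') := by
  have h₁ := hc a a' b
  have h₂ := hc b a a'
  have h₃ := hc a b a'
  rw [add_comm b a] at h₂
  rw [add_comm b a'] at h₃
  linear_combination -h₁ - h₂ + h₃

theorem IsCocycle2.exists_bilinear_sub_symm (hc : IsCocycle2 c) (h2 : IsUnit (2 : ZMod n)) :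
    ∃ β : A →+ A →+ ZMod n, ∀ a b, c a b - β a b = c b a - β b a := by
  set u : ZMod n := ↑h2.unit⁻¹
  have hu : u * 2 = 1 := h2.val_inv_mul
  refine ⟨AddMonoidHom.mk' (fun a => AddMonoidHom.mk' (fun b => u * (c a b - c b a))
    fun b b' => ?_) fun a a' => AddMonoidHom.ext fun b => ?_, fun a b => ?_⟩
  · linear_combination -u * hc.commutator_add_left b b' a
  · simp only [AddMonoidHom.mk'_apply, AddMonoidHom.add_apply]
    linear_combination u * hc.commutator_add_left a a' b
  · simp only [AddMonoidHom.mk'_apply]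
    linear_combination -(c a b - c b a) * hu

theorem IsCoboundary2.symm (hc : IsCoboundary2 c) (a b : A) : c a b = c b a := by
  obtain ⟨g, hg⟩ := hc
  rw [hg, hg, add_comm b a, add_comm (g b)]

theorem isCoboundary2_bilinear_of_symm (h2 : IsUnit (2 : ZMod n)) (β : A →+ A →+ ZMod n)
    (hβ : ∀ a b, β a b = β b a) : IsCoboundary2 fun a b => β a b := by
  set u : ZMod n := ↑h2.unit⁻¹
  have hu : u * 2 = 1 := h2.val_inv_mul
  refine ⟨fun a => -(u * β a a), fun a b => ?_⟩
  simp only [map_add, AddMonoidHom.add_apply]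
  linear_combination -(β a b) * hu - u * hβ b a

end Cocycles

structure IsNormSymmCocycle2 (t : A → A → ZMod n) : Prop where
  isCocycle2 : IsCocycle2 t
  symm : ∀ a b, t a b = t b a
  zero_zero : t 0 0 = 0

theorem IsNormSymmCocycle2.sub {t₁ t₂ : A → A → ZMod n} (h₁ : IsNormSymmCocycle2 t₁)
    (h₂ : IsNormSymmCocycle2 t₂) : IsNormSymmCocycle2 fun a b => t₁ a b - t₂ a b :=
  ⟨h₁.isCocycle2.sub h₂.isCocycle2, fun a b => by rw [h₁.symm, h₂.symm],
    by rw [h₁.zero_zero, h₂.zero_zero, sub_self]⟩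

def powerMap (t : A → A → ZMod n) (a : A) : ZMod n := ∑ j ∈ range n, t a (j • a)

/-- The central extension of `A` by `ZMod n` whose group law is twisted by `t`. -/
@[ext]
structure CocycleExt (t : A → A → ZMod n) where
  fib : ZMod n
  base : A

namespace CocycleExt

variable (t : A → A → ZMod n)

instance : Zero (CocycleExt t) := ⟨⟨0, 0⟩⟩

instance : Add (CocycleExt t) :=
  ⟨fun p q => ⟨p.fib + q.fib + t p.base q.base, p.base + q.base⟩⟩

instance : Neg (CocycleExt t) := ⟨fun p => ⟨-p.fib - t p.base (-p.base), -p.base⟩⟩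

@[simp] theorem fib_zero : (0 : CocycleExt t).fib = 0 := rfl
@[simp] theorem base_zero : (0 : CocycleExt t).base = 0 := rfl
@[simp] theorem fib_add (p q : CocycleExt t) :
    (p + q).fib = p.fib + q.fib + t p.base q.base := rfl
@[simp] theorem base_add (p q : CocycleExt t) : (p + q).base = p.base + q.base := rfl
@[simp] theorem fib_neg (p : CocycleExt t) : (-p).fib = -p.fib - t p.base (-p.base) := rfl
@[simp] theorem base_neg (p : CocycleExt t) : (-p).base = -p.base := rfl

variable [ht : Fact (IsNormSymmCocycle2 t)]

instance : AddCommGroup (CocycleExt t) where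
  add_assoc p q r := by
    ext
    · simp only [fib_add, base_add]
      linear_combination -ht.out.isCocycle2 p.base q.base r.base
    · exact add_assoc _ _ _
  zero_add p := by
    ext
    · simp [ht.out.isCocycle2.apply_zero_left, ht.out.zero_zero]
    · exact zero_add _
  add_zero p := by
    ext
    · simp [ht.out.isCocycle2.apply_zero_right, ht.out.zero_zero]
    · exact add_zero _
  neg_add_cancel p := by
    ext
    · simp only [fib_add, fib_neg, base_neg, fib_zero, ht.out.symm (-p.base)]
      ring
    · exact neg_add_cancel _
  add_comm p q := by
    ext
    · simp only [fib_add, ht.out.symm p.base]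
      ring
    · exact add_comm _ _
  nsmul := nsmulRec
  zsmul := zsmulRec

def inl : ZMod n →+ CocycleExt t where
  toFun x := ⟨x, 0⟩
  map_zero' := rfl
  map_add' x y := by ext <;> simp [ht.out.zero_zero]

theorem inl_injective : Function.Injective (inl t) := fun _ _ h => congrArg fib h

theorem mk_zero_add_mk_zero (a b : A) :
    (⟨0, a⟩ + ⟨0, b⟩ : CocycleExt t) = inl t (t a b) + ⟨0, a + b⟩ := by
  ext <;> simp [inl, ht.out.isCocycle2.apply_zero_left, ht.out.zero_zero]

theorem nsmul_mk_zero (k : ℕ) (a : A) :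
    k • (⟨0, a⟩ : CocycleExt t) = ⟨∑ j ∈ range k, t a (j • a), k • a⟩ := by
  induction k with
  | zero => ext <;> simp
  | succ k ih =>
    rw [succ_nsmul, ih]
    ext
    · simp [sum_range_succ, ht.out.symm (k • a)]
    · simp [succ_nsmul]

theorem exponent_nsmul_mk_zero (hexp : ∀ a : A, n • a = 0) (a : A) :
    n • (⟨0, a⟩ : CocycleExt t) = inl t (powerMap t a) := by
  rw [nsmul_mk_zero, hexp]
  rfl

end CocycleExt

section PowerMap

theorem powerMap_add (t₁ t₂ : A → A → ZMod n) (a : A) :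
    powerMap (fun a b => t₁ a b + t₂ a b) a = powerMap t₁ a + powerMap t₂ a :=
  sum_add_distrib

theorem powerMap_sub (t₁ t₂ : A → A → ZMod n) (a : A) :
    powerMap (fun a b => t₁ a b - t₂ a b) a = powerMap t₁ a - powerMap t₂ a :=
  sum_sub_distrib ..

theorem sum_range_coboundary {M : Type*} [AddCommGroup M] (f : A → M) (a : A) (k : ℕ) :
    ∑ j ∈ range k, (f a + f (j • a) - f (a + j • a)) = k • f a + f 0 - f (k • a) := by
  induction k with
  | zero => simp
  | succ k ih =>
    rw [sum_range_succ, ih, succ_nsmul, succ_nsmul, add_comm a]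
    abel

variable (hexp : ∀ a : A, n • a = 0)
include hexp

theorem IsCoboundary2.powerMap_eq_zero {c : A → A → ZMod n} (hc : IsCoboundary2 c) (a : A) :
    powerMap c a = 0 := by
  obtain ⟨g, hg⟩ := hc
  simp only [powerMap, hg, sum_range_coboundary, hexp, ZModModule.char_nsmul_eq_zero, zero_add,
    sub_self]

theorem powerMap_bilinear (hodd : Odd n) (β : A →+ A →+ ZMod n) (a : A) :
    powerMap (fun a b => β a b) a = 0 := by
  obtain ⟨m, hm⟩ := hodd
  have hsum : ∑ j ∈ range n, j = n * m := by
    apply Nat.eq_of_mul_eq_mul_right two_pos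
    rw [sum_range_id_mul_two, hm, Nat.add_sub_cancel]
    ring
  simp only [powerMap]
  rw [← map_sum, ← sum_smul, hsum, mul_nsmul', hexp, map_zero]

theorem IsNormSymmCocycle2.powerMap_apply_add {t : A → A → ZMod n} (ht : IsNormSymmCocycle2 t)
    (a b : A) : powerMap t (a + b) = powerMap t a + powerMap t b := by
  have : Fact (IsNormSymmCocycle2 t) := ⟨ht⟩
  have hσ := CocycleExt.exponent_nsmul_mk_zero t hexp
  apply CocycleExt.inl_injective t
  rw [map_add, ← hσ, ← hσ, ← hσ, ← smul_add, CocycleExt.mk_zero_add_mk_zero, smul_add,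
    ← map_nsmul, ZModModule.char_nsmul_eq_zero n (t a b), map_zero, zero_add]

theorem IsNormSymmCocycle2.isCoboundary2_of_powerMap_eq_zero [NeZero n]
    {t : A → A → ZMod n} (ht : IsNormSymmCocycle2 t) (h0 : ∀ a, powerMap t a = 0) :
    IsCoboundary2 t := by
  have : Fact (IsNormSymmCocycle2 t) := ⟨ht⟩
  obtain ⟨F, hF⟩ := (Module.Baer.of_divisible UnitAddCircle).extension_property_addMonoidHom
    (CocycleExt.inl t) (CocycleExt.inl_injective t) ZMod.toAddCircle
  have hσ (a : A) : n • F ⟨0, a⟩ = 0 := by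
    rw [← map_nsmul, CocycleExt.exponent_nsmul_mk_zero t hexp, h0, map_zero, map_zero]
  choose g hg using fun a => ZMod.exists_toAddCircle_eq_of_nsmul_eq_zero (hσ a)
  refine ⟨g, fun a b => ZMod.toAddCircle_injective n ?_⟩
  have key := congrArg F (CocycleExt.mk_zero_add_mk_zero t a b)
  rw [map_add, map_add, ← hg, ← hg, ← hg, ← AddMonoidHom.comp_apply F, hF] at key
  rw [map_sub, map_add, key, add_sub_cancel_right]

end PowerMap

theorem Phi_zero (β : A →+ A →+ ZMod n) : Phi 0 β = fun a b => β a b := by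
  funext a b
  simp [Phi, bockstein]

section Bockstein

variable [NeZero n]

theorem isCocycle2_intCoboundary_div (v : A → ℤ)
    (hv : ∀ a b, (n : ℤ) ∣ v a + v b - v (a + b)) :
    IsCocycle2 fun a b => (((v a + v b - v (a + b)) / n : ℤ) : ZMod n) := by
  intro a b d
  have hk : ∀ a b, (n : ℤ) * ((v a + v b - v (a + b)) / n) = v a + v b - v (a + b) :=
    fun a b => Int.mul_ediv_cancel' (hv a b)
  have h : (v b + v d - v (b + d)) / n - (v (a + b) + v d - v (a + b + d)) / n
      + (v a + v (b + d) - v (a + (b + d))) / n - (v a + v b - v (a + b)) / n = (0 : ℤ) := by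
    apply mul_left_cancel₀ (Nat.cast_ne_zero.2 (NeZero.ne n) : (n : ℤ) ≠ 0)
    have hk₂ := hk (a + b) d
    rw [add_assoc a b d] at hk₂ ⊢
    linear_combination hk b d - hk₂ + hk a (b + d) - hk a b
  beta_reduce
  exact_mod_cast congrArg ((↑) : ℤ → ZMod n) h

theorem powerMap_intCoboundary_div (hexp : ∀ a : A, n • a = 0) (v : A → ℤ)
    (hv : ∀ a b, (n : ℤ) ∣ v a + v b - v (a + b)) (a : A) :
    powerMap (fun a b => (((v a + v b - v (a + b)) / n : ℤ) : ZMod n)) a = v a := by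
  simp only [powerMap, ← Int.cast_sum]
  congr 1
  apply mul_left_cancel₀ (Nat.cast_ne_zero.2 (NeZero.ne n) : (n : ℤ) ≠ 0)
  simp only [mul_sum, Int.mul_ediv_cancel' (hv _ _), sum_range_coboundary, hexp,
    nsmul_eq_mul]
  ring

theorem natCast_dvd_val_add_val_sub_val (φ : A →+ ZMod n) (a b : A) :
    (n : ℤ) ∣ ((φ a).val + (φ b).val - (φ (a + b)).val : ℤ) := by
  rw [← ZMod.intCast_zmod_eq_zero_iff_dvd]
  push_cast
  simp [map_add]

theorem isNormSymmCocycle2_bockstein (φ : A →+ ZMod n) : IsNormSymmCocycle2 (bockstein φ) :=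
  ⟨isCocycle2_intCoboundary_div _ (natCast_dvd_val_add_val_sub_val φ),
    fun a b => by simp only [bockstein, add_comm], by simp [bockstein]⟩

theorem powerMap_bockstein (hexp : ∀ a : A, n • a = 0) (φ : A →+ ZMod n) (a : A) :
    powerMap (bockstein φ) a = φ a :=
  (powerMap_intCoboundary_div hexp _ (natCast_dvd_val_add_val_sub_val φ) a).trans (by simp)

theorem isCocycle2_Phi (φ : A →+ ZMod n) (β : A →+ A →+ ZMod n) : IsCocycle2 (Phi φ β) :=
  (isNormSymmCocycle2_bockstein φ).isCocycle2.add (isCocycle2_bilinear β)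

theorem powerMap_Phi (hodd : Odd n) (hexp : ∀ a : A, n • a = 0) (φ : A →+ ZMod n)
    (β : A →+ A →+ ZMod n) (a : A) : powerMap (Phi φ β) a = φ a := by
  unfold Phi
  rw [powerMap_add, powerMap_bockstein hexp, powerMap_bilinear hexp hodd, add_zero]

theorem exists_isCoboundary2_sub_bockstein (hexp : ∀ a : A, n • a = 0) {s : A → A → ZMod n}
    (hs : IsCocycle2 s) (hsymm : ∀ a b, s a b = s b a) :
    ∃ φ : A →+ ZMod n, IsCoboundary2 fun a b => s a b - bockstein φ a b := by
  have hs₀ : IsNormSymmCocycle2 fun a b => s a b - s 0 0 :=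
    ⟨fun a b d => by linear_combination hs a b d, fun a b => by rw [hsymm], sub_self _⟩
  let φ : A →+ ZMod n := AddMonoidHom.mk' _ (hs₀.powerMap_apply_add hexp)
  have ht := hs₀.sub (isNormSymmCocycle2_bockstein φ)
  obtain ⟨g, hg⟩ := ht.isCoboundary2_of_powerMap_eq_zero hexp fun a => by
    rw [powerMap_sub, powerMap_bockstein hexp]
    exact sub_self _
  exact ⟨φ, fun a => g a + s 0 0, fun a b => by linear_combination hg a b⟩

end Bockstein

end Stmt3

open Stmt3 in
theorem stmt_3_general (A : Type*) [AddCommGroup A] (n : ℕ) (hodd : Odd n)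
    (hexp : ∀ a : A, n • a = 0) :
    (∀ (φ : A →+ ZMod n) (β : A →+ A →+ ZMod n), IsCocycle2 (Phi φ β)) ∧
    (∀ c : A → A → ZMod n, IsCocycle2 c →
      ∃ (φ : A →+ ZMod n) (β : A →+ A →+ ZMod n),
        IsCoboundary2 (fun a b => c a b - Phi φ β a b)) ∧
    (∀ (φ : A →+ ZMod n) (β : A →+ A →+ ZMod n),
      IsCoboundary2 (Phi φ β) ↔ (φ = 0 ∧ ∀ a b : A, β a b = β b a)) ∧
    (∀ (σ : A ≃+ A) (φ : A →+ ZMod n) (β : A →+ A →+ ZMod n) (a b : A),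
      Phi (φ.comp σ.toAddMonoidHom)
          (((β.comp σ.toAddMonoidHom).flip.comp σ.toAddMonoidHom).flip) a b
        = Phi φ β (σ a) (σ b)) := by
  have : NeZero n := ⟨hodd.pos.ne'⟩
  have h2 : IsUnit (2 : ZMod n) := by
    simpa using (ZMod.isUnit_iff_coprime 2 n).2 (Nat.coprime_two_left.2 hodd)
  refine ⟨isCocycle2_Phi, fun c hc => ?_, fun φ β => ⟨fun h => ⟨?_, fun a b => ?_⟩, ?_⟩,
    ?_⟩
  · obtain ⟨β, hβ⟩ := hc.exists_bilinear_sub_symm h2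
    obtain ⟨φ, g, hg⟩ :=
      exists_isCoboundary2_sub_bockstein hexp (hc.sub (isCocycle2_bilinear β)) hβ
    exact ⟨φ, β, g, fun a b => by unfold Phi; linear_combination hg a b⟩
  · ext a
    rw [← powerMap_Phi hodd hexp φ β, h.powerMap_eq_zero hexp, AddMonoidHom.zero_apply]
  · have hsymm := h.symm a b
    unfold Phi at hsymm
    linear_combination hsymm - (isNormSymmCocycle2_bockstein φ).symm a b
  · rintro ⟨rfl, hβ⟩
    rw [Phi_zero]
    exact isCoboundary2_bilinear_of_symm h2 β hβ
  · intro σ φ β a b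
    simp [Phi, bockstein]

open Stmt3 in
/-- For odd `n` and `A` a finite abelian group of exponent dividing `n`,
`H²(A, ℤ/n) ≅ Hom(A,ℤ/n) × (Hom(A ⊗ A, ℤ/n)/Sym)` as `Aut(A)`-modules, where the first
factor maps in by the Bockstein and the second by regarding a bilinear form as a 2-cocycle:
(i) `Φ(φ,β)` is a cocycle; (ii) every cocycle is cohomologous to some `Φ(φ,β)`;
(iii) `Φ(φ,β)` is a coboundary iff `φ = 0` and `β` is symmetric; (iv) `Φ` is
`Aut(A)`-equivariant. -/
theorem stmt_3 (A : Type*) [AddCommGroup A] [Finite A] (n : ℕ) (hodd : Odd n)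
    (hn : 0 < n) (hexp : ∀ a : A, n • a = 0) :
    (∀ (φ : A →+ ZMod n) (β : A →+ A →+ ZMod n), IsCocycle2 (Phi φ β)) ∧
    (∀ c : A → A → ZMod n, IsCocycle2 c →
      ∃ (φ : A →+ ZMod n) (β : A →+ A →+ ZMod n),
        IsCoboundary2 (fun a b => c a b - Phi φ β a b)) ∧
    (∀ (φ : A →+ ZMod n) (β : A →+ A →+ ZMod n),
      IsCoboundary2 (Phi φ β) ↔ (φ = 0 ∧ ∀ a b : A, β a b = β b a)) ∧
    (∀ (σ : A ≃+ A) (φ : A →+ ZMod n) (β : A →+ A →+ ZMod n) (a b : A),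
      Phi (φ.comp σ.toAddMonoidHom)
          (((β.comp σ.toAddMonoidHom).flip.comp σ.toAddMonoidHom).flip) a b
        = Phi φ β (σ a) (σ b)) :=
  stmt_3_general A n hodd hexp
end

section
/- Let A be a finite elementary abelian 2-group. The map sending a bilinear form A × A → ℤ/2 (viewed as a 2-cocycle) to its class in H²(A, ℤ/2) induces an isomorphism Sym²(Hom(A, ℤ/2)) ≅ H²(A, ℤ/2), where the kernel of the map from Hom(A,ℤ/2) ⊗ Hom(A,ℤ/2) to H²(A,ℤ/2) is exactly the span of elements u ⊗ v + v ⊗ u. -/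
open TensorProduct

namespace Stmt4

variable {A : Type*} [AddCommGroup A] [Module (ZMod 2) A]

/-- The map sending a tensor `u ⊗ v` of linear functionals to the bilinear form
(= group 2-cochain) `(a,b) ↦ u(a)·v(b)`. -/
noncomputable def toCocycle :
    (Module.Dual (ZMod 2) A ⊗[ZMod 2] Module.Dual (ZMod 2) A) →ₗ[ZMod 2]
      (A → A → ZMod 2) :=
  TensorProduct.lift (LinearMap.mk₂ (ZMod 2)
    (fun u v => fun a b => u a * v b)
    (fun u u' v => by funext a b; simp only [LinearMap.add_apply, Pi.add_apply]; ring)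
    (fun c u v => by
      funext a b; simp only [LinearMap.smul_apply, Pi.smul_apply, smul_eq_mul]; ring)
    (fun u v v' => by funext a b; simp only [LinearMap.add_apply, Pi.add_apply]; ring)
    (fun c u v => by
      funext a b; simp only [LinearMap.smul_apply, Pi.smul_apply, smul_eq_mul]; ring))

/-- group 2-cocycles with trivial `ℤ/2`-coefficients -/
def IsCocycle2 (c : A → A → ZMod 2) : Prop :=
  ∀ a b d : A, c b d - c (a + b) d + c a (b + d) - c a b = 0

/-- group 2-coboundaries -/
def IsCoboundary2 (c : A → A → ZMod 2) : Prop :=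
  ∃ g : A → ZMod 2, ∀ a b : A, c a b = g a + g b - g (a + b)

end Stmt4

/-! A bilinear form `toCocycle t` that is a coboundary is alternating, and in a basis an
alternating form is `x + xᵀ` with `x` its strictly upper triangular part; so the kernel is the
image of `id + comm`, which is the span of the `u ⊗ v + v ⊗ u`.

For surjectivity, subtract from a normalized cocycle `c` the bilinear form agreeing with it on
pairs of basis vectors. The difference `c'` has a bilinear pairing `c' a b + c' b a` and, once that
pairing vanishes, an additive diagonal `c' a a`; both vanish on the basis, hence everywhere. A
symmetric cocycle with zero diagonal makes the central extension of `A` it classifies an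
`𝔽₂`-vector space, and a linear section of that extension exhibits `c'` as a coboundary. -/

open Module TensorProduct

theorem TensorProduct.span_tmul_add_tmul_eq_range {R M : Type*} [CommSemiring R]
    [AddCommMonoid M] [Module R M] :
    Submodule.span R {x : M ⊗[R] M | ∃ u v : M, x = u ⊗ₜ[R] v + v ⊗ₜ[R] u} =
      LinearMap.range (LinearMap.id + (TensorProduct.comm R M M).toLinearMap) := by
  apply le_antisymm
  · rw [Submodule.span_le]
    rintro _ ⟨u, v, rfl⟩
    exact ⟨u ⊗ₜ v, rfl⟩
  · rintro _ ⟨x, rfl⟩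
    induction x using TensorProduct.induction_on with
    | zero => simp
    | tmul u v => exact Submodule.subset_span ⟨u, v, rfl⟩
    | add x y hx hy => rw [map_add]; exact add_mem hx hy

theorem Module.Basis.eq_zero_of_map_add {ι V W : Type*} {n : ℕ} [AddCommGroup V]
    [Module (ZMod n) V] [AddCommGroup W] [Module (ZMod n) W] (b : Basis ι (ZMod n) V)
    {f : V → W} (hf : ∀ x y, f (x + y) = f x + f y) (hb : ∀ i, f (b i) = 0) : f = 0 := by
  have := b.ext (f₁ := (AddMonoidHom.mk' f hf).toZModLinearMap n) (f₂ := 0) hb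
  exact funext fun x => LinearMap.congr_fun this x

theorem TensorProduct.coe_dualDistribEquiv (R M N : Type*) [CommSemiring R] [AddCommMonoid M]
    [AddCommMonoid N] [Module R M] [Module R N] [Module.Finite R M] [Module.Finite R N]
    [Module.Free R M] [Module.Free R N] :
    ⇑(dualDistribEquiv R M N) = dualDistrib R M N := rfl

namespace Stmt4

variable {A : Type*} [AddCommGroup A] {c : A → A → ZMod 2}

theorem isCocycle2_const (k : ZMod 2) : IsCocycle2 fun _ _ : A => k :=
  fun _ _ _ => by ring

theorem IsCocycle2.sub {c' : A → A → ZMod 2} (hc : IsCocycle2 c) (hc' : IsCocycle2 c') :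
    IsCocycle2 (c - c') :=
  fun a b d => by simp only [Pi.sub_apply]; linear_combination hc a b d - hc' a b d

theorem IsCoboundary2.add_const (hc : IsCoboundary2 c) (k : ZMod 2) :
    IsCoboundary2 (c + fun _ _ => k) := by
  obtain ⟨g, hg⟩ := hc
  exact ⟨g + fun _ => k, fun a b => by simp only [Pi.add_apply, hg]; ring⟩

theorem IsCocycle2.apply_zero_left (hc : IsCocycle2 c) (b : A) : c 0 b = c 0 0 := by
  have := hc 0 0 b
  simp only [add_zero, zero_add] at this
  grind

theorem IsCocycle2.apply_zero_right (hc : IsCocycle2 c) (a : A) : c a 0 = c 0 0 := by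
  have := hc a 0 0
  simp only [add_zero] at this
  grind

theorem IsCocycle2.pairing_add_left (hc : IsCocycle2 c) (a a' b : A) :
    c (a + a') b + c b (a + a') = (c a b + c b a) + (c a' b + c b a') := by
  have h₁ := hc a a' b
  have h₂ := hc b a a'
  have h₃ := hc a b a'
  rw [add_comm b a', add_comm a b] at h₃
  grind

@[ext]
structure CentralExt (c : A → A → ZMod 2) where
  base : A
  fiber : ZMod 2

instance : Zero (CentralExt c) := ⟨⟨0, 0⟩⟩

instance : Add (CentralExt c) :=
  ⟨fun x y => ⟨x.base + y.base, x.fiber + y.fiber + c x.base y.base⟩⟩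

instance : Neg (CentralExt c) := ⟨id⟩

variable [Module (ZMod 2) A]

theorem IsCoboundary2.apply_self (hc : IsCoboundary2 c) (a : A) : c a a = c 0 0 := by
  obtain ⟨g, hg⟩ := hc
  rw [hg a a, hg 0 0, ZModModule.add_self a, add_zero]
  grind

theorem IsCocycle2.apply_add_self (hc : IsCocycle2 c) (h0 : c 0 0 = 0) (a b : A) :
    c (a + b) (a + b) = c a a + c b b + (c a b + c b a) := by
  have h₁ := hc a b (a + b)
  have h₂ := hc b a b
  have h₃ := hc a b b
  rw [add_left_comm, ZModModule.add_self, add_zero] at h₁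
  rw [add_comm b a] at h₂
  rw [ZModModule.add_self, hc.apply_zero_right, h0] at h₃
  grind

abbrev CentralExt.addCommGroup (hc : IsCocycle2 c) (hsymm : ∀ a b, c a b = c b a)
    (hdiag : ∀ a, c a a = 0) : AddCommGroup (CentralExt c) where
  nsmul := nsmulRec
  zsmul := zsmulRec
  add_assoc x y z := CentralExt.ext (add_assoc _ _ _) (by
    show x.fiber + y.fiber + c x.base y.base + z.fiber + c (x.base + y.base) z.base =
      x.fiber + (y.fiber + z.fiber + c y.base z.base) + c x.base (y.base + z.base)
    have := hc x.base y.base z.base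
    grind)
  zero_add x := CentralExt.ext (zero_add _) (by
    show 0 + x.fiber + c 0 x.base = x.fiber
    rw [hc.apply_zero_left, hdiag]; ring)
  add_zero x := CentralExt.ext (add_zero _) (by
    show x.fiber + 0 + c x.base 0 = x.fiber
    rw [hc.apply_zero_right, hdiag]; ring)
  neg_add_cancel x := CentralExt.ext (ZModModule.add_self x.base) (by
    show x.fiber + x.fiber + c x.base x.base = 0
    rw [hdiag]; grind)
  add_comm x y := CentralExt.ext (add_comm _ _) (by
    show x.fiber + y.fiber + c x.base y.base = y.fiber + x.fiber + c y.base x.base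
    rw [hsymm, add_comm x.fiber])

theorem IsCocycle2.isCoboundary2_of_symm (hc : IsCocycle2 c)
    (hsymm : ∀ a b, c a b = c b a) (hdiag : ∀ a, c a a = 0) : IsCoboundary2 c := by
  let := CentralExt.addCommGroup hc hsymm hdiag
  let : Module (ZMod 2) (CentralExt c) :=
    AddCommGroup.zmodModule fun x => (two_nsmul x).trans (neg_add_cancel x)
  let π : CentralExt c →ₗ[ZMod 2] A :=
    (AddMonoidHom.mk' CentralExt.base fun _ _ => rfl).toZModLinearMap 2
  obtain ⟨σ, hσ⟩ := π.exists_rightInverse_of_surjective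
    (LinearMap.range_eq_top.2 fun a => ⟨⟨a, 0⟩, rfl⟩)
  have hbase : ∀ a, (σ a).base = a := LinearMap.congr_fun hσ
  refine ⟨fun a => (σ a).fiber, fun a b => ?_⟩
  have h : (σ (a + b)).fiber = (σ a).fiber + (σ b).fiber + c (σ a).base (σ b).base :=
    congrArg CentralExt.fiber (map_add σ a b)
  rw [hbase, hbase] at h
  grind

theorem IsCocycle2.isCoboundary2_of_basis {ι : Type*}
    (b : Basis ι (ZMod 2) A) (hc : IsCocycle2 c) (h0 : c 0 0 = 0)
    (hb : ∀ i j, c (b i) (b j) = 0) : IsCoboundary2 c := by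
  have hpair_basis : ∀ j, (fun a => c a (b j) + c (b j) a) = 0 := fun j =>
    b.eq_zero_of_map_add (fun a a' => hc.pairing_add_left a a' (b j))
      fun i => by rw [hb, hb, add_zero]
  have hpair : ∀ a a', c a a' + c a' a = 0 := fun a => by
    refine congrFun (b.eq_zero_of_map_add (fun x x' => ?_) fun j => congrFun (hpair_basis j) a)
    have := hc.pairing_add_left x x' a
    grind
  have hdiag : ∀ a, c a a = 0 := congrFun <| b.eq_zero_of_map_add
    (fun a a' => by rw [hc.apply_add_self h0, hpair, add_zero]) fun i => hb i i
  exact hc.isCoboundary2_of_symm (fun a a' => by grind [hpair a a']) hdiag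

theorem toCocycle_apply (t : Dual (ZMod 2) A ⊗[ZMod 2] Dual (ZMod 2) A) (a b : A) :
    toCocycle t a b = dualDistrib (ZMod 2) A A t (a ⊗ₜ b) := by
  induction t using TensorProduct.induction_on with
  | zero => simp
  | tmul u v => simp [toCocycle]
  | add x y hx hy => simp [hx, hy]

theorem toCocycle_add_left (t : Dual (ZMod 2) A ⊗[ZMod 2] Dual (ZMod 2) A) (a a' b : A) :
    toCocycle t (a + a') b = toCocycle t a b + toCocycle t a' b := by
  simp [toCocycle_apply, add_tmul]

theorem toCocycle_add_right (t : Dual (ZMod 2) A ⊗[ZMod 2] Dual (ZMod 2) A) (a b b' : A) :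
    toCocycle t a (b + b') = toCocycle t a b + toCocycle t a b' := by
  simp [toCocycle_apply, tmul_add]

theorem toCocycle_zero_zero (t : Dual (ZMod 2) A ⊗[ZMod 2] Dual (ZMod 2) A) :
    toCocycle t 0 0 = 0 := by
  simp [toCocycle_apply]

theorem toCocycle_comm (t : Dual (ZMod 2) A ⊗[ZMod 2] Dual (ZMod 2) A) (a b : A) :
    toCocycle (TensorProduct.comm _ _ _ t) a b = toCocycle t b a := by
  simp only [toCocycle_apply]
  induction t using TensorProduct.induction_on with
  | zero => simp
  | tmul u v => simp [mul_comm]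
  | add x y hx hy => simp [hx, hy]

theorem isCocycle2_toCocycle (t : Dual (ZMod 2) A ⊗[ZMod 2] Dual (ZMod 2) A) :
    IsCocycle2 (toCocycle t) := fun a b d => by
  rw [toCocycle_add_left, toCocycle_add_right]
  ring

theorem isCoboundary2_toCocycle_add_comm (x : Dual (ZMod 2) A ⊗[ZMod 2] Dual (ZMod 2) A) :
    IsCoboundary2 (toCocycle (x + TensorProduct.comm _ _ _ x)) := by
  refine ⟨fun a => toCocycle x a a, fun a b => ?_⟩
  simp only [map_add, Pi.add_apply, toCocycle_comm, toCocycle_add_left, toCocycle_add_right]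
  grind

section FiniteDimensional

variable [Finite A]

theorem toCocycle_ext_basis {ι : Type*} (b : Basis ι (ZMod 2) A)
    {t t' : Dual (ZMod 2) A ⊗[ZMod 2] Dual (ZMod 2) A}
    (h : ∀ i j, toCocycle t (b i) (b j) = toCocycle t' (b i) (b j)) : t = t' := by
  apply (dualDistribEquiv (ZMod 2) A A).injective
  refine (b.tensorProduct b).ext fun p => ?_
  rw [coe_dualDistribEquiv, Basis.tensorProduct_apply,
    ← toCocycle_apply, ← toCocycle_apply]
  exact h p.1 p.2

theorem exists_toCocycle_basis_eq {ι : Type*} (b : Basis ι (ZMod 2) A) (M : ι → ι → ZMod 2) :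
    ∃ t : Dual (ZMod 2) A ⊗[ZMod 2] Dual (ZMod 2) A,
      ∀ i j, toCocycle t (b i) (b j) = M i j := by
  refine ⟨(dualDistribEquiv (ZMod 2) A A).symm
    ((b.tensorProduct b).constr (ZMod 2) fun p => M p.1 p.2), fun i j => ?_⟩
  rw [toCocycle_apply, ← coe_dualDistribEquiv, LinearEquiv.apply_symm_apply,
    ← Basis.tensorProduct_apply, Basis.constr_basis]

theorem exists_add_comm_eq_of_toCocycle_self_eq_zero
    {t : Dual (ZMod 2) A ⊗[ZMod 2] Dual (ZMod 2) A} (ht : ∀ a, toCocycle t a a = 0) :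
    ∃ x, x + TensorProduct.comm _ _ _ x = t := by
  have hsymm : ∀ a a', toCocycle t a a' = toCocycle t a' a := fun a a' => by
    have := ht (a + a')
    rw [toCocycle_add_left, toCocycle_add_right, toCocycle_add_right, ht, ht] at this
    grind
  let b := Module.finBasis (ZMod 2) A
  obtain ⟨x, hx⟩ := exists_toCocycle_basis_eq b fun i j =>
    if i < j then toCocycle t (b i) (b j) else 0
  refine ⟨x, toCocycle_ext_basis b fun i j => ?_⟩
  rw [map_add, Pi.add_apply, Pi.add_apply, toCocycle_comm, hx, hx]
  rcases lt_trichotomy i j with h | rfl | h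
  · simp [h, h.not_gt]
  · simp [ht]
  · simp [h, h.not_gt, hsymm (b i)]

theorem isCoboundary2_toCocycle_iff (t : Dual (ZMod 2) A ⊗[ZMod 2] Dual (ZMod 2) A) :
    IsCoboundary2 (toCocycle t) ↔
      t ∈ LinearMap.range (LinearMap.id + (TensorProduct.comm _ _ _).toLinearMap) := by
  refine ⟨fun h => ?_, fun ⟨x, hx⟩ => hx ▸ isCoboundary2_toCocycle_add_comm x⟩
  exact exists_add_comm_eq_of_toCocycle_self_eq_zero fun a =>
    (h.apply_self a).trans (toCocycle_zero_zero t)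

theorem exists_isCoboundary2_sub_toCocycle (hc : IsCocycle2 c) :
    ∃ t : Dual (ZMod 2) A ⊗[ZMod 2] Dual (ZMod 2) A,
      IsCoboundary2 (fun a b => c a b - toCocycle t a b) := by
  let b := Module.finBasis (ZMod 2) A
  obtain ⟨t, ht⟩ := exists_toCocycle_basis_eq b fun i j => c (b i) (b j) - c 0 0
  have hc' : IsCocycle2 (c - toCocycle t - fun _ _ => c 0 0) :=
    (hc.sub (isCocycle2_toCocycle t)).sub (isCocycle2_const _)
  have h := (hc'.isCoboundary2_of_basis b (by simp [toCocycle_zero_zero])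
    fun i j => by simp [ht]).add_const (c 0 0)
  rw [sub_add_cancel] at h
  exact ⟨t, h⟩

end FiniteDimensional

end Stmt4

open Stmt4 in
/-- For a finite elementary abelian 2-group `A`, the map sending a bilinear form
(as a 2-cocycle) to its class in `H²(A, ℤ/2)` induces an isomorphism
`Sym²(Hom(A,ℤ/2)) ≅ H²(A,ℤ/2)`: every bilinear form is a cocycle, the kernel of
`Hom(A,ℤ/2) ⊗ Hom(A,ℤ/2) → H²(A,ℤ/2)` is exactly the span of the `u ⊗ v + v ⊗ u`,
and every cocycle is cohomologous to the image of some tensor. -/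
theorem stmt_4 (A : Type*) [AddCommGroup A] [Module (ZMod 2) A] [Finite A] :
    (∀ t : Module.Dual (ZMod 2) A ⊗[ZMod 2] Module.Dual (ZMod 2) A,
      IsCocycle2 (toCocycle t)) ∧
    (∀ t : Module.Dual (ZMod 2) A ⊗[ZMod 2] Module.Dual (ZMod 2) A,
      IsCoboundary2 (toCocycle t) ↔
        t ∈ Submodule.span (ZMod 2)
          {x : Module.Dual (ZMod 2) A ⊗[ZMod 2] Module.Dual (ZMod 2) A |
            ∃ u v : Module.Dual (ZMod 2) A, x = u ⊗ₜ[ZMod 2] v + v ⊗ₜ[ZMod 2] u}) ∧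
    (∀ c : A → A → ZMod 2, IsCocycle2 c →
      ∃ t : Module.Dual (ZMod 2) A ⊗[ZMod 2] Module.Dual (ZMod 2) A,
        IsCoboundary2 (fun a b => c a b - toCocycle t a b)) := by
  refine ⟨isCocycle2_toCocycle, fun t => ?_, fun c hc => exists_isCoboundary2_sub_toCocycle hc⟩
  rw [span_tmul_add_tmul_eq_range]
  exact isCoboundary2_toCocycle_iff t
end

section
/- Let Γ be a finite group, H a finite group with a Γ-action, and A a finite abelian group with an action of H ⋊ Γ, where |Γ| is coprime to both |H| and |A|. Then there is a bijection between (a) isomorphism classes of extensions 1 → A → G → H → 1 of Γ-groups (i.e. G carries a Γ-action making both maps Γ-equivariant and inducing the given H ⋊ Γ-action on A), and (b) H²(H ⋊ Γ, A); the bijection sends the Γ-group extension A → G → H to the group extension A → G ⋊ Γ → H ⋊ Γ. -/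
universe u

namespace Stmt8

/-- An extension of `Γ`-groups `1 → A → G → H → 1` inducing the given `H ⋊ Γ`-action `ρ`
on `A`. -/
structure GammaExtension (Γ : Type u) [Group Γ] (H : Type u) [Group H]
    (φ : Γ →* MulAut H) (A : Type u) [CommGroup A]
    (ρ : (H ⋊[φ] Γ) →* MulAut A) : Type (u + 1) where
  G : Type u
  [grp : Group G]
  act : Γ →* MulAut G
  i : A →* G
  p : G →* H
  i_inj : Function.Injective i
  p_surj : Function.Surjective p
  range_eq_ker : i.range = p.ker
  p_equivariant : ∀ (γ : Γ) (g : G), p (act γ g) = φ γ (p g)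
  conj_i : ∀ (g : G) (a : A), g * i a * g⁻¹ = i (ρ (SemidirectProduct.inl (p g)) a)
  act_i : ∀ (γ : Γ) (a : A), act γ (i a) = i (ρ (SemidirectProduct.inr γ) a)

attribute [instance] GammaExtension.grp

variable {Γ H A : Type u} [Group Γ] [Group H] [CommGroup A]
  {φ : Γ →* MulAut H} {ρ : (H ⋊[φ] Γ) →* MulAut A}

/-- An isomorphism of `Γ`-group extensions of `H` by `A`: a `Γ`-equivariant isomorphism
restricting to the identity on `A` and inducing the identity on `H`. -/
structure ExtIso (E E' : GammaExtension Γ H φ A ρ) : Type u where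
  e : E.G ≃* E'.G
  equivariant : ∀ (γ : Γ) (g : E.G), e (E.act γ g) = E'.act γ (e g)
  comm_i : ∀ a : A, e (E.i a) = E'.i a
  comm_p : ∀ g : E.G, E'.p (e g) = E.p g

/-- 2-cocycles on `H ⋊ Γ` with values in `A` (action `ρ`). -/
def IsTwoCocycle (ρ : (H ⋊[φ] Γ) →* MulAut A)
    (σ : (H ⋊[φ] Γ) → (H ⋊[φ] Γ) → A) : Prop :=
  ∀ x y z, ρ x (σ y z) * σ x (y * z) = σ (x * y) z * σ x y

/-- 2-coboundaries on `H ⋊ Γ` with values in `A` (action `ρ`). -/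
def IsTwoCoboundary (ρ : (H ⋊[φ] Γ) →* MulAut A)
    (σ : (H ⋊[φ] Γ) → (H ⋊[φ] Γ) → A) : Prop :=
  ∃ t : (H ⋊[φ] Γ) → A, ∀ x y, σ x y = t x * ρ x (t y) * (t (x * y))⁻¹

/-- The induced surjection `G ⋊ Γ → H ⋊ Γ` of a `Γ`-extension. -/
def qmap (E : GammaExtension Γ H φ A ρ) : (E.G ⋊[E.act] Γ) →* (H ⋊[φ] Γ) :=
  SemidirectProduct.map E.p (MonoidHom.id Γ) (by
    intro γ
    ext g
    exact E.p_equivariant γ g)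

/-- `E` realizes the 2-cocycle `σ` if `σ` arises from a set-theoretic section of the
extension `A → G ⋊ Γ → H ⋊ Γ`. -/
def Realizes (E : GammaExtension Γ H φ A ρ)
    (σ : (H ⋊[φ] Γ) → (H ⋊[φ] Γ) → A) : Prop :=
  ∃ s : (H ⋊[φ] Γ) → (E.G ⋊[E.act] Γ),
    (∀ x, qmap E (s x) = x) ∧
    ∀ x y, s x * s y = SemidirectProduct.inl (E.i (σ x y)) * s (x * y)

end Stmt8

/-!
The Γ-extension `A → G → H` is replaced by the group extension `A → G ⋊ Γ → H ⋊ Γ`, and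
everything is read off factor sets of its sections. Factor sets are 2-cocycles, change by
coboundaries when the section changes, and determine the extension up to equivalence, since an
extension with factor set `σ` is equivalent to the twisted product `A ×_σ (H ⋊ Γ)`.

An equivalence `G ⋊ Γ ≃ G' ⋊ Γ` of group extensions moves `inr Γ` by a crossed homomorphism
`Γ → A`. As `|Γ|` is prime to `|A|` it is principal, so after conjugating by an element of `A`
the equivalence fixes `inr Γ` and restricts to an isomorphism `G ≃ G'` of Γ-extensions.

Conversely, in the twisted product `W` of a cocycle, the preimage of `inr Γ` is an extension of
`Γ` by `A`, so by Schur–Zassenhaus it contains a complement, which is a copy of `Γ` lying over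
`inr Γ`. Then `W = G ⋊ Γ`, where `G` is the kernel of `W → Γ` and `Γ` acts on it by
conjugation.
-/

open Stmt8

theorem exists_eq_inv_mul_of_coprime {Γ A : Type*} [Group Γ] [Finite Γ] [CommGroup A]
    (τ : Γ →* MulAut A) (hcop : Nat.Coprime (Nat.card Γ) (Nat.card A)) (b : Γ → A)
    (hb : ∀ γ δ, b (γ * δ) = b γ * τ γ (b δ)) : ∃ d : A, ∀ γ, b γ = d⁻¹ * τ γ d := by
  have := Fintype.ofFinite Γ
  set c := ∏ γ, b γ
  -- averaging `hb` over `δ` shows that `b γ ^ |Γ|` is the coboundary of `c`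
  have hc : ∀ γ, b γ ^ Nat.card Γ = c * (τ γ c)⁻¹ := by
    intro γ
    have hτc : τ γ c = (b γ)⁻¹ ^ Nat.card Γ * c := calc
      _ = ∏ δ, (b γ)⁻¹ * b (γ * δ) := by
          simp only [c, map_prod, hb, inv_mul_cancel_left]
      _ = _ := by
          rw [Finset.prod_mul_distrib, Finset.prod_const, Finset.card_univ,
            ← Nat.card_eq_fintype_card, Fintype.prod_equiv (Equiv.mulLeft γ) (b <| γ * ·) b
              fun _ => rfl]
    rw [hτc, inv_pow, mul_inv, inv_inv, mul_inv_cancel_comm_assoc]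
  have hpow := hcop.symm.pow_left_bijective
  obtain ⟨d, hd⟩ := hpow.2 c⁻¹
  refine ⟨d, fun γ => hpow.1 ?_⟩
  simp only at hd ⊢
  rw [hc, mul_pow, inv_pow, ← map_pow, hd, inv_inv, map_inv]

theorem MonoidHom.exists_comp_eq_id_of_coprime {T Γ : Type*} [Group T] [Group Γ] (θ : T →* Γ)
    (hθ : Function.Surjective θ) (hcop : Nat.Coprime (Nat.card θ.ker) (Nat.card Γ)) :
    ∃ k : Γ →* T, θ.comp k = MonoidHom.id Γ := by
  have hindex : θ.ker.index = Nat.card Γ := by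
    rw [Subgroup.index_ker, MonoidHom.range_eq_top.2 hθ, Subgroup.card_top]
  obtain ⟨K, hK⟩ := Subgroup.exists_right_complement'_of_coprime (hindex ▸ hcop)
  have hbij : Function.Bijective (θ.comp K.subtype) := by
    refine ⟨(injective_iff_map_eq_one _).2 fun x hx => ?_, fun γ => ?_⟩
    · exact Subtype.ext (Subgroup.disjoint_def.1 hK.disjoint hx x.2)
    · obtain ⟨t, rfl⟩ := hθ γ
      obtain ⟨⟨n, x⟩, hnx, -⟩ := hK.existsUnique t
      have hn : θ n = 1 := n.2
      exact ⟨x, by simp [← hnx, hn]⟩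
  refine ⟨K.subtype.comp (MulEquiv.ofBijective _ hbij).symm.toMonoidHom, MonoidHom.ext fun γ => ?_⟩
  exact (MulEquiv.ofBijective _ hbij).apply_symm_apply γ

namespace GroupExtension

theorem exists_rightHom_comp_eq_inr_of_coprime {Γ H A W : Type*} [Group Γ] [Group H] [Group A]
    [Group W] {φ : Γ →* MulAut H} (S : GroupExtension A W (H ⋊[φ] Γ))
    (hcop : Nat.Coprime (Nat.card Γ) (Nat.card A)) :
    ∃ k : Γ →* W, S.rightHom.comp k = SemidirectProduct.inr := by
  let T := (SemidirectProduct.inr : Γ →* H ⋊[φ] Γ).range.comap S.rightHom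
  let θ : T →* Γ := (SemidirectProduct.rightHom.comp S.rightHom).comp T.subtype
  have hθ : Function.Surjective θ := fun γ => by
    obtain ⟨w, hw⟩ := S.rightHom_surjective (SemidirectProduct.inr γ)
    exact ⟨⟨w, γ, hw.symm⟩, by simp [θ, hw]⟩
  have hker : Nat.card A = Nat.card θ.ker := by
    refine Nat.card_eq_of_bijective (fun a => ⟨⟨S.inl a, 1, by simp⟩, by simp [θ]⟩) ⟨?_, ?_⟩
    · exact fun a b h => S.inl_injective (congrArg (fun t : θ.ker => (t : W)) h)
    · rintro ⟨⟨t, γ, hγ⟩, ht⟩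
      have hγ1 : γ = 1 := by simpa [θ, ← hγ] using ht
      obtain ⟨a, ha⟩ : t ∈ S.inl.range := by
        rw [S.range_inl_eq_ker_rightHom, MonoidHom.mem_ker, ← hγ, hγ1, map_one]
      exact ⟨a, by simp [ha]⟩
  obtain ⟨k, hk⟩ := θ.exists_comp_eq_id_of_coprime hθ (hker ▸ hcop.symm)
  refine ⟨T.subtype.comp k, MonoidHom.ext fun γ => ?_⟩
  obtain ⟨δ, hδ⟩ := (k γ).2
  have hδγ : δ = γ := by simpa [θ, ← hδ] using DFunLike.congr_fun hk γ
  simp [← hδ, hδγ]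

def conjInlEquiv {N E G : Type*} [CommGroup N] [Group E] [Group G] (S : GroupExtension N E G)
    (n : N) : S.Equiv S where
  __ := MulAut.conj (S.inl n)
  inl_comm := funext fun m => by simp [← map_inv, ← map_mul, mul_comm n m]
  rightHom_comm := funext fun e => by simp

section FactorSet

variable {A E X : Type*} [CommGroup A] [Group E] [Group X] (S : GroupExtension A E X)

def IsFactorSet (σ : X → X → A) : Prop :=
  ∃ s : S.Section, ∀ x y, s x * s y = S.inl (σ x y) * s (x * y)

theorem exists_isFactorSet : ∃ σ, S.IsFactorSet σ := by
  let s := S.surjInvRightHom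
  choose σ hσ using fun x y => s.mul_mul_mul_inv_mem_range_inl x y
  exact ⟨σ, s, fun x y => by rw [hσ, inv_mul_cancel_right]⟩

variable {S}

theorem IsFactorSet.equiv {E' : Type*} [Group E'] {S' : GroupExtension A E' X}
    {σ : X → X → A} (h : S.IsFactorSet σ) (f : S.Equiv S') : S'.IsFactorSet σ := by
  obtain ⟨s, hs⟩ := h
  refine ⟨s.equivComp f, fun x y => ?_⟩
  simp only [Section.equivComp_apply]
  rw [← map_mul, hs, map_mul, f.map_inl]

variable {ρ : X →* MulAut A}

theorem conjAct_eq_comp_iff : S.conjAct = ρ.comp S.rightHom ↔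
    ∀ e a, e * S.inl a = S.inl (ρ (S.rightHom e) a) * e := by
  refine ⟨fun hρ e a => ?_, fun h => ?_⟩
  · rw [← MonoidHom.comp_apply, ← hρ, S.inl_conjAct_comm, inv_mul_cancel_right]
  · ext e a
    apply S.inl_injective
    rw [S.inl_conjAct_comm, h, mul_inv_cancel_right]
    rfl

theorem mul_inl_of_conjAct_eq (hρ : S.conjAct = ρ.comp S.rightHom) (e : E) (a : A) :
    e * S.inl a = S.inl (ρ (S.rightHom e) a) * e :=
  conjAct_eq_comp_iff.1 hρ e a

theorem section_one_eq {σ : X → X → A} {s : S.Section}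
    (hs : ∀ x y, s x * s y = S.inl (σ x y) * s (x * y)) : s 1 = S.inl (σ 1 1) :=
  mul_right_cancel (by rw [hs, mul_one])

theorem inl_mul_section_mul (hρ : S.conjAct = ρ.comp S.rightHom) {σ : X → X → A}
    {s : S.Section} (hs : ∀ x y, s x * s y = S.inl (σ x y) * s (x * y)) (a b : A) (x y : X) :
    S.inl a * s x * (S.inl b * s y) = S.inl (a * ρ x b * σ x y) * s (x * y) := by
  calc S.inl a * s x * (S.inl b * s y) = S.inl a * (s x * S.inl b) * s y := by
        simp only [mul_assoc]
    _ = S.inl a * S.inl (ρ x b) * (s x * s y) := by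
        rw [mul_inl_of_conjAct_eq hρ, Section.rightHom_section]; simp only [mul_assoc]
    _ = S.inl (a * ρ x b * σ x y) * s (x * y) := by
        rw [hs, map_mul S.inl, map_mul S.inl]; simp only [mul_assoc]

end FactorSet

section Cohomology

variable {Γ H A : Type u} [Group Γ] [Group H] [CommGroup A] {φ : Γ →* MulAut H}
  {ρ : (H ⋊[φ] Γ) →* MulAut A} {E : Type*} [Group E] {S : GroupExtension A E (H ⋊[φ] Γ)}
  {σ σ' : (H ⋊[φ] Γ) → (H ⋊[φ] Γ) → A}

theorem IsFactorSet.isTwoCocycle (hρ : S.conjAct = ρ.comp S.rightHom) (h : S.IsFactorSet σ) :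
    IsTwoCocycle ρ σ := by
  obtain ⟨s, hs⟩ := h
  have hs₁ : ∀ x y, S.inl 1 * s x * (S.inl 1 * s y) = S.inl (σ x y) * s (x * y) := by
    simpa using hs
  intro x y z
  have key : S.inl (ρ x (σ y z) * σ x (y * z)) * s (x * (y * z))
      = S.inl (σ (x * y) z * σ x y) * s (x * (y * z)) := calc
    _ = S.inl 1 * s x * (S.inl (σ y z) * s (y * z)) := by
        rw [inl_mul_section_mul hρ hs, one_mul]
    _ = S.inl 1 * s x * (S.inl 1 * s y) * (S.inl 1 * s z) := by
        rw [← hs y z]; simp only [map_one, one_mul, mul_assoc]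
    _ = _ := by
        rw [hs₁, inl_mul_section_mul hρ hs, map_one, mul_one, mul_comm, mul_assoc]
  exact S.inl_injective (mul_right_cancel key)

theorem IsFactorSet.of_isTwoCoboundary_div (hρ : S.conjAct = ρ.comp S.rightHom)
    (h : S.IsFactorSet σ') (ht : IsTwoCoboundary ρ fun x y => σ x y * (σ' x y)⁻¹) :
    S.IsFactorSet σ := by
  obtain ⟨s, hs⟩ := h
  obtain ⟨t, ht⟩ := ht
  refine ⟨⟨fun x => S.inl (t x) * s x, fun x => by simp⟩, fun x y => ?_⟩
  have hσ : σ x y = t x * ρ x (t y) * (t (x * y))⁻¹ * σ' x y := by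
    rw [← ht x y, inv_mul_cancel_right]
  simp only [Section.coe_mk]
  rw [inl_mul_section_mul hρ hs, ← mul_assoc, ← map_mul, hσ, mul_right_comm _ (t (x * y))⁻¹,
    inv_mul_cancel_right]

theorem IsFactorSet.isTwoCoboundary_div (hρ : S.conjAct = ρ.comp S.rightHom)
    (h : S.IsFactorSet σ) (h' : S.IsFactorSet σ') :
    IsTwoCoboundary ρ fun x y => σ x y * (σ' x y)⁻¹ := by
  obtain ⟨s, hs⟩ := h
  obtain ⟨s', hs'⟩ := h'
  choose t ht using fun x => s.exists_eq_inl_mul s' x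
  refine ⟨t, fun x y => ?_⟩
  have key : S.inl (σ x y * t (x * y)) * s' (x * y)
      = S.inl (t x * ρ x (t y) * σ' x y) * s' (x * y) := by
    rw [map_mul, mul_assoc, ← ht, ← hs, ht, ht, inl_mul_section_mul hρ hs']
  have hσ : σ x y = t x * ρ x (t y) * σ' x y * (t (x * y))⁻¹ :=
    eq_mul_inv_of_mul_eq (S.inl_injective (mul_right_cancel key))
  show σ x y * (σ' x y)⁻¹ = _
  rw [hσ, mul_right_comm _ (t (x * y))⁻¹, mul_inv_cancel_right]

end Cohomology

end GroupExtension

namespace Stmt8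

section TwistedProduct

variable {Γ H A : Type u} [Group Γ] [Group H] [CommGroup A]
  {φ : Γ →* MulAut H} {ρ : (H ⋊[φ] Γ) →* MulAut A} {σ : (H ⋊[φ] Γ) → (H ⋊[φ] Γ) → A}

theorem IsTwoCocycle.apply_one_left (hσ : IsTwoCocycle ρ σ) (z : H ⋊[φ] Γ) :
    σ 1 z = σ 1 1 := by
  have h := hσ 1 1 z
  rw [one_mul, one_mul, map_one, MulAut.one_apply] at h
  exact mul_left_cancel h

theorem IsTwoCocycle.apply_one_right (hσ : IsTwoCocycle ρ σ) (x : H ⋊[φ] Γ) :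
    σ x 1 = ρ x (σ 1 1) := by
  have h := hσ x 1 1
  rw [mul_one, mul_one] at h
  exact (mul_right_cancel h).symm

/-- `⟨a, x⟩` stands for `inl a * s x`, `s` a section with factor set `σ`. As `σ` is not normalized,
the identity is `⟨(σ 1 1)⁻¹, 1⟩`. -/
structure TwistedProduct (ρ : (H ⋊[φ] Γ) →* MulAut A) (σ : (H ⋊[φ] Γ) → (H ⋊[φ] Γ) → A) :
    Type u where
  left : A
  right : H ⋊[φ] Γ

namespace TwistedProduct

@[ext]
theorem ext {w v : TwistedProduct ρ σ} (h₁ : w.left = v.left) (h₂ : w.right = v.right) :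
    w = v := by
  cases w; cases v; cases h₁; cases h₂; rfl

instance : Mul (TwistedProduct ρ σ) :=
  ⟨fun w v => ⟨w.left * ρ w.right v.left * σ w.right v.right, w.right * v.right⟩⟩

instance : One (TwistedProduct ρ σ) := ⟨⟨(σ 1 1)⁻¹, 1⟩⟩

instance : Inv (TwistedProduct ρ σ) :=
  ⟨fun w => ⟨(σ 1 1)⁻¹ * (σ w.right⁻¹ w.right)⁻¹ * ρ w.right⁻¹ w.left⁻¹, w.right⁻¹⟩⟩

@[simp] theorem mul_left (w v : TwistedProduct ρ σ) :
    (w * v).left = w.left * ρ w.right v.left * σ w.right v.right := rfl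

@[simp] theorem mul_right (w v : TwistedProduct ρ σ) : (w * v).right = w.right * v.right := rfl

@[simp] theorem one_left : (1 : TwistedProduct ρ σ).left = (σ 1 1)⁻¹ := rfl

@[simp] theorem one_right : (1 : TwistedProduct ρ σ).right = 1 := rfl

variable [hσ : Fact (IsTwoCocycle ρ σ)]

instance : Group (TwistedProduct ρ σ) :=
  Group.ofLeftAxioms
    (fun w v z => by
      ext : 1
      · have hc : σ (w.right * v.right) z.right
            = ρ w.right (σ v.right z.right) * σ w.right (v.right * z.right)
              * (σ w.right v.right)⁻¹ := by
          rw [hσ.out]; group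
        simp only [mul_left, mul_right, map_mul, MulAut.mul_apply, hc]
        simp only [mul_assoc, mul_comm (σ w.right v.right), inv_mul_cancel, mul_one]
      · exact mul_assoc _ _ _)
    (fun w => by
      ext : 1
      · simp only [mul_left, one_left, one_right, map_one, MulAut.one_apply,
          hσ.out.apply_one_left, inv_mul_cancel_comm]
      · exact one_mul _)
    (fun w => by
      ext : 1
      · show (σ 1 1)⁻¹ * (σ w.right⁻¹ w.right)⁻¹ * ρ w.right⁻¹ w.left⁻¹ * ρ w.right⁻¹ w.left
          * σ w.right⁻¹ w.right = (σ 1 1)⁻¹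
        rw [map_inv]
        group
      · exact inv_mul_cancel _)

end TwistedProduct

variable (ρ σ) [hσ : Fact (IsTwoCocycle ρ σ)]

def twistedExtension : GroupExtension A (TwistedProduct ρ σ) (H ⋊[φ] Γ) where
  inl :=
    { toFun := fun a => ⟨a * (σ 1 1)⁻¹, 1⟩
      map_one' := by ext : 1 <;> simp
      map_mul' := fun a b => by
        ext : 1
        · simp [mul_assoc, mul_comm, mul_left_comm]
        · simp }
  rightHom := { toFun := TwistedProduct.right, map_one' := rfl, map_mul' := fun _ _ => rfl }
  inl_injective := fun a b h => by simpa using congrArg TwistedProduct.left h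
  range_inl_eq_ker_rightHom := by
    ext w
    refine ⟨fun ⟨a, ha⟩ => ha ▸ rfl, fun hw => ⟨w.left * σ 1 1, ?_⟩⟩
    ext : 1
    · simp
    · exact hw.symm
  rightHom_surjective := fun x => ⟨⟨1, x⟩, rfl⟩

theorem twistedExtension_conjAct :
    (twistedExtension ρ σ).conjAct = ρ.comp (twistedExtension ρ σ).rightHom := by
  refine GroupExtension.conjAct_eq_comp_iff.2 fun w a => ?_
  ext : 1
  · have h₁ := hσ.out.apply_one_right w.right
    have h₂ := hσ.out.apply_one_left w.right
    simp [twistedExtension, h₁, h₂, mul_comm, mul_left_comm]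
  · exact (mul_one _).trans (one_mul _).symm

theorem twistedExtension_isFactorSet : (twistedExtension ρ σ).IsFactorSet σ := by
  refine ⟨⟨fun x => ⟨1, x⟩, fun _ => rfl⟩, fun x y => ?_⟩
  show (⟨1, x⟩ * ⟨1, y⟩ : TwistedProduct ρ σ) = (twistedExtension ρ σ).inl (σ x y) * ⟨1, x * y⟩
  ext : 1
  · simp [twistedExtension, hσ.out.apply_one_left]
  · exact (one_mul _).symm

end TwistedProduct

end Stmt8

namespace GroupExtension

variable {Γ H A : Type u} [Group Γ] [Group H] [CommGroup A] {φ : Γ →* MulAut H}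
  {ρ : (H ⋊[φ] Γ) →* MulAut A} {σ : (H ⋊[φ] Γ) → (H ⋊[φ] Γ) → A}
  {E E' : Type*} [Group E] [Group E'] {S : GroupExtension A E (H ⋊[φ] Γ)}
  {S' : GroupExtension A E' (H ⋊[φ] Γ)}

theorem IsFactorSet.nonempty_twistedExtension_equiv (hρ : S.conjAct = ρ.comp S.rightHom)
    (h : S.IsFactorSet σ) [Fact (IsTwoCocycle ρ σ)] :
    Nonempty ((twistedExtension ρ σ).Equiv S) := by
  obtain ⟨s, hs⟩ := h
  let f : TwistedProduct ρ σ →* E :=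
    { toFun := fun w => S.inl w.left * s w.right
      map_one' := by simp [section_one_eq hs]
      map_mul' := fun w v => (inl_mul_section_mul hρ hs _ _ _ _).symm }
  refine ⟨Equiv.ofMonoidHom f ?_ ?_⟩
  · ext a
    simp [f, twistedExtension, section_one_eq hs]
  · ext w : 1
    simp [f, twistedExtension]

theorem IsFactorSet.nonempty_equiv (hρ : S.conjAct = ρ.comp S.rightHom)
    (hρ' : S'.conjAct = ρ.comp S'.rightHom) (h : S.IsFactorSet σ) (h' : S'.IsFactorSet σ) :
    Nonempty (S.Equiv S') := by
  have := Fact.mk (h.isTwoCocycle hρ)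
  obtain ⟨f⟩ := h.nonempty_twistedExtension_equiv hρ
  obtain ⟨f'⟩ := h'.nonempty_twistedExtension_equiv hρ'
  exact ⟨f.symm.trans f'⟩

end GroupExtension

namespace Stmt8

open SemidirectProduct

variable {Γ H A : Type u} [Group Γ] [Group H] [CommGroup A]
  {φ : Γ →* MulAut H} {ρ : (H ⋊[φ] Γ) →* MulAut A}

namespace GammaExtension

section ToGroupExtension

variable (E : GammaExtension Γ H φ A ρ)

theorem p_i (a : A) : E.p (E.i a) = 1 :=
  (E.range_eq_ker ▸ ⟨a, rfl⟩ : E.i a ∈ E.p.ker)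

def toGroupExtension : GroupExtension A (E.G ⋊[E.act] Γ) (H ⋊[φ] Γ) where
  inl := inl.comp E.i
  rightHom := qmap E
  inl_injective := inl_injective.comp E.i_inj
  range_inl_eq_ker_rightHom := by
    ext w
    constructor
    · rintro ⟨a, rfl⟩
      ext <;> simp [qmap, p_i]
    · intro hw
      have hp : E.p w.left = 1 := congrArg SemidirectProduct.left hw
      have hr : w.right = 1 := congrArg SemidirectProduct.right hw
      obtain ⟨a, ha⟩ : w.left ∈ E.i.range := E.range_eq_ker ▸ hp
      exact ⟨a, by ext <;> simp [ha, hr]⟩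
  rightHom_surjective x := by
    obtain ⟨g, hg⟩ := E.p_surj x.left
    exact ⟨⟨g, x.right⟩, by ext <;> simp [qmap, hg]⟩

@[simp] theorem toGroupExtension_inl (a : A) :
    E.toGroupExtension.inl a = inl (E.i a) := rfl

@[simp] theorem toGroupExtension_rightHom (w : E.G ⋊[E.act] Γ) :
    E.toGroupExtension.rightHom w = ⟨E.p w.left, w.right⟩ := rfl

theorem toGroupExtension_rightHom_inr (γ : Γ) :
    E.toGroupExtension.rightHom (inr γ) = inr γ := by
  ext <;> simp

theorem toGroupExtension_conjAct :
    E.toGroupExtension.conjAct = ρ.comp E.toGroupExtension.rightHom := by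
  refine GroupExtension.conjAct_eq_comp_iff.2 fun w a => ?_
  have hinr : ∀ (γ : Γ) (b : A), (inr γ : E.G ⋊[E.act] Γ) * inl (E.i b)
      = inl (E.i (ρ (inr γ) b)) * inr γ := fun γ b => by
    rw [← E.act_i, inl_aut]; simp [mul_assoc]
  have hinl : ∀ (g : E.G) (b : A), (inl g : E.G ⋊[E.act] Γ) * inl (E.i b)
      = inl (E.i (ρ (inl (E.p g)) b)) * inl g := fun g b => by
    rw [← E.conj_i]; simp [mul_assoc]
  calc w * inl (E.i a) = inl w.left * (inr w.right * inl (E.i a)) := by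
        rw [← mul_assoc, inl_left_mul_inr_right]
    _ = inl (E.i (ρ (inl (E.p w.left)) (ρ (inr w.right) a))) * w := by
        rw [hinr, ← mul_assoc, hinl, mul_assoc, inl_left_mul_inr_right]
    _ = _ := by
        rw [toGroupExtension_rightHom, mk_eq_inl_mul_inr, map_mul, MulAut.mul_apply]; rfl

theorem realizes_iff_isFactorSet {σ : (H ⋊[φ] Γ) → (H ⋊[φ] Γ) → A} :
    Realizes E σ ↔ E.toGroupExtension.IsFactorSet σ :=
  ⟨fun ⟨s, hs, h⟩ => ⟨⟨s, hs⟩, h⟩, fun ⟨s, h⟩ => ⟨s, s.rightHom_section, h⟩⟩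

end ToGroupExtension

section Equiv

variable {E E' : GammaExtension Γ H φ A ρ} (F : E.toGroupExtension.Equiv E'.toGroupExtension)

theorem right_equiv_apply (w : E.G ⋊[E.act] Γ) : (F w).right = w.right :=
  congrArg SemidirectProduct.right (F.rightHom_map w)

theorem inl_left_equiv_apply_inl (g : E.G) : inl (F (inl g)).left = F (inl g) := by
  ext
  · rfl
  · simp [right_equiv_apply]

end Equiv

section OfSplitting

variable {W : Type u} [Group W] {S : GroupExtension A W (H ⋊[φ] Γ)}

theorem right_rightHom_eq_one {w : W} (hw : w ∈ (rightHom.comp S.rightHom).ker) :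
    (S.rightHom w).right = 1 := hw

theorem rightHom_eq_inl_left {w : W} (hw : w ∈ (rightHom.comp S.rightHom).ker) :
    S.rightHom w = inl (S.rightHom w).left := by
  ext <;> simp [right_rightHom_eq_one hw]

variable (hρ : S.conjAct = ρ.comp S.rightHom) (k : Γ →* W) (hk : S.rightHom.comp k = inr)

def ofSplitting : GammaExtension Γ H φ A ρ where
  G := (rightHom.comp S.rightHom).ker
  act := MulAut.conjNormal.comp k
  i := S.inl.codRestrict _ fun a => by simp
  p :=
    { toFun := fun n => (S.rightHom n).left
      map_one' := by simp
      map_mul' := fun m n => by simp [right_rightHom_eq_one m.2] }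
  i_inj a b h := S.inl_injective (congrArg Subtype.val h)
  p_surj h := by
    obtain ⟨w, hw⟩ := S.rightHom_surjective (inl h)
    exact ⟨⟨w, by simp [hw]⟩, by simp [hw]⟩
  range_eq_ker := by
    ext n
    refine ⟨fun ⟨a, ha⟩ => ha ▸ by simp, fun hn => ?_⟩
    obtain ⟨a, ha⟩ : (n : W) ∈ S.inl.range := by
      rw [S.range_inl_eq_ker_rightHom, MonoidHom.mem_ker, rightHom_eq_inl_left n.2]
      exact (congrArg inl hn).trans (map_one _)
    exact ⟨a, Subtype.ext ha⟩
  p_equivariant γ n := by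
    show (S.rightHom (k γ * n * (k γ)⁻¹)).left = φ γ (S.rightHom n).left
    rw [map_mul, map_mul, map_inv, ← MonoidHom.comp_apply S.rightHom k, hk,
      rightHom_eq_inl_left n.2, ← map_inv, ← inl_aut, left_inl, left_inl]
  conj_i g a := Subtype.ext <| by
    show (g : W) * S.inl a * (g : W)⁻¹ = S.inl (ρ (inl (S.rightHom g).left) a)
    rw [GroupExtension.mul_inl_of_conjAct_eq hρ, ← rightHom_eq_inl_left g.2, mul_inv_cancel_right]
  act_i γ a := Subtype.ext <| by
    show k γ * S.inl a * (k γ)⁻¹ = S.inl (ρ (inr γ) a)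
    rw [GroupExtension.mul_inl_of_conjAct_eq hρ, ← MonoidHom.comp_apply S.rightHom k, hk,
      mul_inv_cancel_right]

theorem nonempty_ofSplitting_equiv :
    Nonempty ((ofSplitting hρ k hk).toGroupExtension.Equiv S) := by
  let f : (ofSplitting hρ k hk).G ⋊[(ofSplitting hρ k hk).act] Γ →* W :=
    lift (rightHom.comp S.rightHom).ker.subtype k fun γ => by ext; rfl
  refine ⟨GroupExtension.Equiv.ofMonoidHom f ?_ ?_⟩
  · ext a
    show (S.inl a : W) * k 1 = S.inl a
    rw [map_one, mul_one]
  · ext ⟨⟨n, hn⟩, γ⟩ : 1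
    show S.rightHom (n * k γ) = ⟨(S.rightHom n).left, γ⟩
    rw [map_mul, ← MonoidHom.comp_apply S.rightHom k, hk, rightHom_eq_inl_left hn,
      mk_eq_inl_mul_inr, left_inl]

end OfSplitting

end GammaExtension

namespace ExtIso

open GammaExtension

variable {E E' : GammaExtension Γ H φ A ρ}

def toEquiv (f : ExtIso E E') : E.toGroupExtension.Equiv E'.toGroupExtension where
  __ := SemidirectProduct.congr f.e (MulEquiv.refl Γ) fun γ => MulEquiv.ext (f.equivariant γ)
  inl_comm := funext fun a => by ext <;> simp [f.comm_i]
  rightHom_comm := funext fun w => by ext <;> simp [f.comm_p]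

def ofEquiv (F : E.toGroupExtension.Equiv E'.toGroupExtension) (hF : ∀ γ, F (inr γ) = inr γ) :
    ExtIso E E' where
  e :=
    { toFun := fun g => (F (inl g)).left
      invFun := fun g => (F.symm (inl g)).left
      left_inv := fun g => by
        dsimp only
        rw [inl_left_equiv_apply_inl F]
        exact congrArg SemidirectProduct.left (F.toMulEquiv.symm_apply_apply (inl g))
      right_inv := fun g => by
        dsimp only
        rw [inl_left_equiv_apply_inl F.symm]
        exact congrArg SemidirectProduct.left (F.toMulEquiv.apply_symm_apply (inl g))
      map_mul' := fun g h => by simp [right_equiv_apply] }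
  equivariant γ g := by
    show (F (inl (E.act γ g))).left = _
    rw [inl_aut, map_mul, map_mul, hF, hF, ← inl_left_equiv_apply_inl F, ← inl_aut, left_inl]
    rfl
  comm_i a := congrArg SemidirectProduct.left (F.map_inl a)
  comm_p g := congrArg SemidirectProduct.left (F.rightHom_map (inl g))

theorem nonempty_of_equiv [Finite Γ] (hcop : Nat.Coprime (Nat.card Γ) (Nat.card A))
    (F : E.toGroupExtension.Equiv E'.toGroupExtension) : Nonempty (ExtIso E E') := by
  set S' := E'.toGroupExtension
  have hmem : ∀ γ, F (inr γ) * (inr γ)⁻¹ ∈ S'.inl.range := fun γ => by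
    rw [S'.range_inl_eq_ker_rightHom, MonoidHom.mem_ker, map_mul, map_inv, F.rightHom_map,
      toGroupExtension_rightHom_inr, toGroupExtension_rightHom_inr, mul_inv_cancel]
  choose b hb using hmem
  replace hb : ∀ γ, F (inr γ) = S'.inl (b γ) * inr γ := fun γ => by
    rw [hb, inv_mul_cancel_right]
  have hconj : ∀ γ a, (inr γ : E'.G ⋊[E'.act] Γ) * S'.inl a = S'.inl (ρ (inr γ) a) * inr γ :=
    fun γ a => by
      rw [GroupExtension.mul_inl_of_conjAct_eq E'.toGroupExtension_conjAct,
        toGroupExtension_rightHom_inr]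
  have hcocycle : ∀ γ δ, b (γ * δ) = b γ * (ρ.comp inr) γ (b δ) := fun γ δ => by
    apply S'.inl_injective
    apply mul_right_cancel (b := (inr (γ * δ) : E'.G ⋊[E'.act] Γ))
    rw [← hb, map_mul inr, map_mul F, hb, hb, mul_assoc, ← mul_assoc (inr γ), hconj]
    simp [mul_assoc]
  obtain ⟨d, hd⟩ := exists_eq_inv_mul_of_coprime (ρ.comp inr) hcop b hcocycle
  refine ⟨ofEquiv (F.trans (S'.conjInlEquiv d)) fun γ => ?_⟩
  show S'.inl d * F (inr γ) * (S'.inl d)⁻¹ = inr γ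
  rw [hb, hd, mul_assoc, mul_assoc, ← map_inv, hconj, ← mul_assoc, ← mul_assoc, ← map_mul,
    ← map_mul]
  simp

end ExtIso

end Stmt8

open Stmt8 in
theorem stmt_8_general (Γ H A : Type u) [Group Γ] [Finite Γ] [Group H]
    [CommGroup A] (φ : Γ →* MulAut H) (ρ : (H ⋊[φ] Γ) →* MulAut A)
    (h2 : Nat.Coprime (Nat.card Γ) (Nat.card A)) :
    (∀ E : GammaExtension Γ H φ A ρ,
      ∃ σ : (H ⋊[φ] Γ) → (H ⋊[φ] Γ) → A, IsTwoCocycle ρ σ ∧ Realizes E σ) ∧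
    (∀ (E E' : GammaExtension Γ H φ A ρ)
        (σ σ' : (H ⋊[φ] Γ) → (H ⋊[φ] Γ) → A),
      IsTwoCocycle ρ σ → IsTwoCocycle ρ σ' → Realizes E σ → Realizes E' σ' →
      (Nonempty (ExtIso E E') ↔
        IsTwoCoboundary ρ fun x y => σ x y * (σ' x y)⁻¹)) ∧
    (∀ σ : (H ⋊[φ] Γ) → (H ⋊[φ] Γ) → A,
      IsTwoCocycle ρ σ → ∃ E : GammaExtension Γ H φ A ρ, Realizes E σ) := by
  simp only [GammaExtension.realizes_iff_isFactorSet]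
  refine ⟨fun E => ?_, fun E E' σ σ' _ _ hE hE' => ⟨?_, fun ht => ?_⟩, fun σ hσ => ?_⟩
  · obtain ⟨σ, hσ⟩ := E.toGroupExtension.exists_isFactorSet
    exact ⟨σ, hσ.isTwoCocycle E.toGroupExtension_conjAct, hσ⟩
  · rintro ⟨f⟩
    exact (hE.equiv f.toEquiv).isTwoCoboundary_div E'.toGroupExtension_conjAct hE'
  · obtain ⟨F⟩ := hE.nonempty_equiv E.toGroupExtension_conjAct E'.toGroupExtension_conjAct
      (hE'.of_isTwoCoboundary_div E'.toGroupExtension_conjAct ht)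
    exact ExtIso.nonempty_of_equiv h2 F
  · have := Fact.mk hσ
    obtain ⟨k, hk⟩ := (twistedExtension ρ σ).exists_rightHom_comp_eq_inr_of_coprime h2
    obtain ⟨F⟩ := GammaExtension.nonempty_ofSplitting_equiv (twistedExtension_conjAct ρ σ) k hk
    exact ⟨_, (twistedExtension_isFactorSet ρ σ).equiv F.symm⟩

open Stmt8 in
/-- For `Γ` finite acting on finite `H`, and finite abelian `A` with `H ⋊ Γ`-action `ρ`,
with `|Γ|` coprime to `|H|` and `|A|`: isomorphism classes of extensions of `Γ`-groups
`1 → A → G → H → 1` inducing `ρ` are in bijection with `H²(H ⋊ Γ, A)`, the bijection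
sending `A → G → H` to (the class of) the group extension `A → G ⋊ Γ → H ⋊ Γ`:
every `Γ`-extension realizes a 2-cocycle of `H ⋊ Γ`; two `Γ`-extensions are isomorphic
iff their realized cocycles are cohomologous; and every 2-cocycle is realized. -/
theorem stmt_8 (Γ H A : Type u) [Group Γ] [Finite Γ] [Group H] [Finite H]
    [CommGroup A] [Finite A] (φ : Γ →* MulAut H) (ρ : (H ⋊[φ] Γ) →* MulAut A)
    (h1 : Nat.Coprime (Nat.card Γ) (Nat.card H))
    (h2 : Nat.Coprime (Nat.card Γ) (Nat.card A)) :
    (∀ E : GammaExtension Γ H φ A ρ,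
      ∃ σ : (H ⋊[φ] Γ) → (H ⋊[φ] Γ) → A, IsTwoCocycle ρ σ ∧ Realizes E σ) ∧
    (∀ (E E' : GammaExtension Γ H φ A ρ)
        (σ σ' : (H ⋊[φ] Γ) → (H ⋊[φ] Γ) → A),
      IsTwoCocycle ρ σ → IsTwoCocycle ρ σ' → Realizes E σ → Realizes E' σ' →
      (Nonempty (ExtIso E E') ↔
        IsTwoCoboundary ρ fun x y => σ x y * (σ' x y)⁻¹)) ∧
    (∀ σ : (H ⋊[φ] Γ) → (H ⋊[φ] Γ) → A,
      IsTwoCocycle ρ σ → ∃ E : GammaExtension Γ H φ A ρ, Realizes E σ) :=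
  stmt_8_general Γ H A φ ρ h2
end

section
/- Let Γ be a finite group and H a Γ-group with trivial coinvariants H_Γ = 1. Let A be an abelian group with an action of H ⋊ Γ, and let 1 → A → G → H → 1 be an extension of Γ-groups inducing the given action on A. Then the coinvariants G_Γ are a quotient of the coinvariants A_{H⋊Γ}; in particular G_Γ is abelian and is generated by the image of A. -/
/-- Let `Γ` act on `H` with trivial coinvariants `H_Γ = 1`, let `A` be abelian with an
action `ρ` of `H ⋊ Γ`, and let `1 → A → G → H → 1` be an extension of `Γ`-groups inducing
the given action on `A`.  Then the coinvariants `G_Γ` are a quotient of the coinvariants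
`A_{H⋊Γ}`: the natural map `A_{H⋊Γ} → G_Γ` induced by `i` is surjective; in particular
`G_Γ` is abelian and generated by the image of `A`. -/
theorem stmt_9 (Γ : Type*) [Group Γ] (H : Type*) [Group H] (φ : Γ →* MulAut H)
    (hHΓ : Subgroup.normalClosure {x : H | ∃ (γ : Γ) (h : H), x = h⁻¹ * φ γ h} = ⊤)
    (A : Type*) [CommGroup A] (ρ : (H ⋊[φ] Γ) →* MulAut A)
    (G : Type*) [Group G] (act : Γ →* MulAut G) (i : A →* G) (p : G →* H)
    (hi : Function.Injective i) (hp : Function.Surjective p)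
    (hex : i.range = p.ker)
    (hpe : ∀ (γ : Γ) (g : G), p (act γ g) = φ γ (p g))
    (hconj : ∀ (g : G) (a : A), g * i a * g⁻¹ = i (ρ (SemidirectProduct.inl (p g)) a))
    (hact : ∀ (γ : Γ) (a : A), act γ (i a) = i (ρ (SemidirectProduct.inr γ) a)) :
    ∃ f : (A ⧸ Subgroup.normalClosure
            {x : A | ∃ (k : H ⋊[φ] Γ) (a : A), x = a⁻¹ * ρ k a}) →*
          (G ⧸ Subgroup.normalClosure {x : G | ∃ (γ : Γ) (g : G), x = g⁻¹ * act γ g}),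
      Function.Surjective f ∧
      (∀ a : A, f (QuotientGroup.mk a) = QuotientGroup.mk (i a)) ∧
      (∀ x y : G ⧸ Subgroup.normalClosure {x : G | ∃ (γ : Γ) (g : G), x = g⁻¹ * act γ g},
        x * y = y * x) := by
  set N := Subgroup.normalClosure {x : G | ∃ (γ : Γ) (g : G), x = g⁻¹ * act γ g} with hNdef
  let q : G →* G ⧸ N := QuotientGroup.mk' N
  have hqact : ∀ (γ : Γ) (g : G), q (act γ g) = q g := by
    intro γ g
    have hm : g⁻¹ * act γ g ∈ N := Subgroup.subset_normalClosure ⟨γ, g, rfl⟩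
    have h1 : q (g⁻¹ * act γ g) = 1 := (QuotientGroup.eq_one_iff _).2 hm
    rw [map_mul, map_inv] at h1
    exact (inv_mul_eq_one.mp h1).symm
  -- p maps N onto H
  have hmap : Subgroup.map p N = ⊤ := by
    rw [hNdef, Subgroup.map_normalClosure _ _ hp, eq_top_iff, ← hHΓ]
    apply Subgroup.normalClosure_mono
    rintro x ⟨γ, h, rfl⟩
    obtain ⟨g, rfl⟩ := hp h
    exact ⟨g⁻¹ * act γ g, ⟨γ, g, rfl⟩, by rw [map_mul, map_inv, hpe]⟩
  have key : ∀ g : G, ∃ a : A, q (i a) = q g := by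
    intro g
    have hpg : p g ∈ Subgroup.map p N := hmap ▸ Subgroup.mem_top _
    obtain ⟨n, hn, hpn⟩ := hpg
    have hker : g * n⁻¹ ∈ p.ker := by
      rw [MonoidHom.mem_ker, map_mul, map_inv, hpn, mul_inv_cancel]
    rw [← hex] at hker
    obtain ⟨a, ha⟩ := hker
    refine ⟨a, ?_⟩
    have hn1 : q n = 1 := (QuotientGroup.eq_one_iff n).2 hn
    rw [ha, map_mul, map_inv, hn1, inv_one, mul_one]
  have hcomm : ∀ x y : G ⧸ N, x * y = y * x := by
    intro x y
    obtain ⟨g, rfl⟩ := QuotientGroup.mk'_surjective N x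
    obtain ⟨g', rfl⟩ := QuotientGroup.mk'_surjective N y
    obtain ⟨a, ha⟩ := key g
    obtain ⟨a', ha'⟩ := key g'
    show q g * q g' = q g' * q g
    rw [← ha, ← ha', ← map_mul, ← map_mul, ← map_mul, ← map_mul, mul_comm a a']
  have hker : ∀ x ∈ {x : A | ∃ (k : H ⋊[φ] Γ) (a : A), x = a⁻¹ * ρ k a},
      q (i x) = 1 := by
    rintro _ ⟨k, a, rfl⟩
    have hb : q (i (ρ (SemidirectProduct.inr k.right) a)) = q (i a) := by
      rw [← hact, hqact]
    have hk : q (i (ρ k a)) = q (i a) := by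
      rw [← SemidirectProduct.inl_left_mul_inr_right k, map_mul, MulAut.mul_apply]
      obtain ⟨g, hg⟩ := hp k.left
      have hc := hconj g (ρ (SemidirectProduct.inr k.right) a)
      rw [hg] at hc
      rw [← hc, map_mul, map_mul, map_inv, hb, hcomm (q g) (q (i a)), mul_assoc,
        mul_inv_cancel, mul_one]
    rw [map_mul, map_inv, map_mul, map_inv, hk, inv_mul_cancel]
  have hle : Subgroup.normalClosure {x : A | ∃ (k : H ⋊[φ] Γ) (a : A), x = a⁻¹ * ρ k a}
      ≤ (q.comp i).ker := Subgroup.normalClosure_le_normal hker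
  refine ⟨QuotientGroup.lift _ (q.comp i) hle, ?_, fun a => rfl, hcomm⟩
  intro y
  obtain ⟨g, rfl⟩ := QuotientGroup.mk'_surjective N y
  obtain ⟨a, ha⟩ := key g
  exact ⟨QuotientGroup.mk a, ha⟩
end

section
/- Let Γ and H be finite groups with Γ acting on H, and let V be a finite abelian group with an action of H ⋊ Γ, with gcd(|V|·|H|, |Γ|) = 1. Let 1 → V → G → H → 1 be an extension of Γ-groups inducing the given action on V. Then the group of Γ-equivariant automorphisms of G that restrict to the identity on V and induce the identity on H has order |H¹(H ⋊ Γ, V)| · |V^Γ| / |V^{H⋊Γ}|. -/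
/-!
Twisting by `g ↦ i (t (p g)) * g` identifies the automorphisms of `G` that are trivial on `V` and
on `H` with the crossed homomorphisms `t : H → V`, and the `Γ`-equivariant ones with the
equivariant crossed homomorphisms. These are exactly the restrictions to `H` of the cocycles of
`H ⋊ Γ` vanishing on `Γ`, i.e. the kernel of restriction `Z¹(H ⋊ Γ, V) → Z¹(Γ, V)`. As `|Γ|` is
prime to `|V|`, averaging over `Γ` gives `Z¹(Γ, V) = B¹(Γ, V)`, so restriction is onto. The count
then follows from `|Z¹| = |H¹| · |B¹|` and `|B¹(K, V)| · |V^K| = |V|` for `K = Γ, H ⋊ Γ`.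
-/

namespace Stmt10

variable {K V : Type*} [Group K] [CommGroup V]

/-- 1-cocycles of `K` with values in `V` (action `ρ`). -/
def oneCocycles (ρ : K →* MulAut V) : Subgroup (K → V) where
  carrier := {t | ∀ x y : K, t (x * y) = t x * ρ x (t y)}
  one_mem' := by intro x y; simp
  mul_mem' := by
    intro a b ha hb x y
    simp only [Pi.mul_apply, ha x y, hb x y, map_mul]
    exact mul_mul_mul_comm _ _ _ _
  inv_mem' := by
    intro a ha x y
    simp [Pi.inv_apply, ha x y, map_inv, mul_inv, mul_comm]

/-- 1-coboundaries of `K` with values in `V` (action `ρ`). -/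
def oneCoboundaries (ρ : K →* MulAut V) : Subgroup (K → V) where
  carrier := {t | ∃ v : V, ∀ x : K, t x = v⁻¹ * ρ x v}
  one_mem' := ⟨1, by simp⟩
  mul_mem' := by
    rintro a b ⟨v, hv⟩ ⟨w, hw⟩
    refine ⟨v * w, fun x => ?_⟩
    simp only [Pi.mul_apply, hv x, hw x, map_mul, mul_inv]
    exact mul_mul_mul_comm _ _ _ _
  inv_mem' := by
    rintro a ⟨v, hv⟩
    refine ⟨v⁻¹, fun x => ?_⟩
    simp [Pi.inv_apply, hv x, mul_inv, mul_comm]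

instance (ρ : K →* MulAut V) :
    ((oneCoboundaries ρ).comap (oneCocycles ρ).subtype).Normal :=
  Subgroup.normal_of_comm _

/-- The first group cohomology `H¹(K, V) = Z¹(K,V)/B¹(K,V)`. -/
def H1 (ρ : K →* MulAut V) :=
  oneCocycles ρ ⧸ ((oneCoboundaries ρ).comap (oneCocycles ρ).subtype)

end Stmt10

namespace Stmt10

section Cocycles

variable {K L V : Type*} [Group K] [Group L] [CommGroup V] (ρ : K →* MulAut V)

theorem oneCocycles_apply_one {t : K → V} (ht : t ∈ oneCocycles ρ) : t 1 = 1 := by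
  have h := ht 1 1
  simp only [mul_one, map_one, MulAut.one_apply] at h
  exact left_eq_mul.mp h

def coboundaryHom : V →* (K → V) where
  toFun v k := v⁻¹ * ρ k v
  map_one' := by ext; simp
  map_mul' v w := by
    ext k
    simp only [Pi.mul_apply, map_mul, mul_inv]
    exact mul_mul_mul_comm _ _ _ _

theorem range_coboundaryHom : (coboundaryHom ρ).range = oneCoboundaries ρ := by
  ext t
  exact ⟨fun ⟨v, hv⟩ => ⟨v, fun k => (congrFun hv k).symm⟩,
    fun ⟨v, hv⟩ => ⟨v, funext fun k => (hv k).symm⟩⟩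

theorem mem_ker_coboundaryHom {v : V} : v ∈ (coboundaryHom ρ).ker ↔ ∀ k, ρ k v = v := by
  rw [MonoidHom.mem_ker, funext_iff]
  exact forall_congr' fun k => inv_mul_eq_one.trans eq_comm

theorem oneCoboundaries_le_oneCocycles : oneCoboundaries ρ ≤ oneCocycles ρ := by
  rintro t ⟨v, hv⟩ x y
  simp only [hv, map_mul, MulAut.mul_apply, map_inv]
  group

theorem card_oneCoboundaries_mul_card_fixedPoints :
    Nat.card (oneCoboundaries ρ) * Nat.card {v : V // ∀ k, ρ k v = v} = Nat.card V := by
  rw [Subgroup.card_eq_card_quotient_mul_card_subgroup (coboundaryHom ρ).ker,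
    Nat.card_congr (QuotientGroup.quotientKerEquivRange _).toEquiv, range_coboundaryHom]
  exact congrArg _
    (Nat.card_congr (Equiv.subtypeEquivRight fun _ => (mem_ker_coboundaryHom ρ).symm))

theorem card_oneCocycles_eq_card_H1_mul :
    Nat.card (oneCocycles ρ) = Nat.card (H1 ρ) * Nat.card (oneCoboundaries ρ) := by
  rw [Subgroup.card_eq_card_quotient_mul_card_subgroup
    ((oneCoboundaries ρ).comap (oneCocycles ρ).subtype)]
  exact congrArg _
    (Nat.card_congr (Subgroup.subgroupOfEquivOfLe (oneCoboundaries_le_oneCocycles ρ)).toEquiv)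

/-- Averaging: for a cocycle `t` and `w = ∏ₖ t k`, the cocycle identity gives
`t k ^ |K| = w * (ρ k w)⁻¹`, and `|K|`-th roots are unique in `V`. -/
theorem oneCocycles_le_oneCoboundaries_of_coprime [Finite K]
    (h : (Nat.card V).Coprime (Nat.card K)) : oneCocycles ρ ≤ oneCoboundaries ρ := by
  intro t ht
  have := Fintype.ofFinite K
  set w := ∏ k : K, t k
  have hpow : ∀ k, t k ^ Nat.card K = w * (ρ k w)⁻¹ := fun k => by
    rw [eq_mul_inv_iff_mul_eq]
    calc t k ^ Nat.card K * ρ k w = ∏ l : K, t k * ρ k (t l) := by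
          rw [Finset.prod_mul_distrib, Finset.prod_const, map_prod, Finset.card_univ,
            Nat.card_eq_fintype_card]
      _ = ∏ l : K, t (k * l) := Finset.prod_congr rfl fun l _ => (ht k l).symm
      _ = w := Fintype.prod_equiv (Equiv.mulLeft k) _ _ fun _ => rfl
  refine ⟨((powCoprime h).symm w)⁻¹, fun k => ?_⟩
  rw [← (powCoprime h).symm_apply_apply (t k), powCoprime_apply, hpow, powCoprime_symm_apply,
    powCoprime_symm_apply, inv_inv, map_inv, map_zpow, mul_zpow, inv_zpow]

def restrictCocycles (f : L →* K) : oneCocycles ρ →* oneCocycles (ρ.comp f) where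
  toFun s := ⟨s.1 ∘ f, fun x y => by
    simp only [Function.comp_apply, map_mul, MonoidHom.comp_apply]
    exact s.2 _ _⟩
  map_one' := rfl
  map_mul' _ _ := rfl

theorem restrictCocycles_surjective (f : L →* K)
    (h : oneCocycles (ρ.comp f) ≤ oneCoboundaries (ρ.comp f)) :
    Function.Surjective (restrictCocycles ρ f) := by
  rintro ⟨t, ht⟩
  obtain ⟨v, hv⟩ := h ht
  exact ⟨⟨coboundaryHom ρ v, oneCoboundaries_le_oneCocycles ρ ⟨v, fun _ => rfl⟩⟩,
    Subtype.ext (funext fun x => (hv x).symm)⟩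

theorem card_oneCocycles_eq_mul_card_ker (f : L →* K)
    (h : oneCocycles (ρ.comp f) ≤ oneCoboundaries (ρ.comp f)) :
    Nat.card (oneCocycles ρ) =
      Nat.card (oneCoboundaries (ρ.comp f)) * Nat.card (restrictCocycles ρ f).ker := by
  rw [Subgroup.card_eq_card_quotient_mul_card_subgroup (restrictCocycles ρ f).ker,
    Nat.card_congr (QuotientGroup.quotientKerEquivOfSurjective _
      (restrictCocycles_surjective ρ f h)).toEquiv]
  congr 1
  rw [le_antisymm h (oneCoboundaries_le_oneCocycles _)]

end Cocycles

section SemidirectProduct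

open SemidirectProduct

variable {H Γ V : Type*} [Group H] [Group Γ] [CommGroup V]

def equivariantOneCocycles (ρH : H →* MulAut V) (φ : Γ →* MulAut H)
    (ρΓ : Γ →* MulAut V) : Set (H → V) :=
  {t | t ∈ oneCocycles ρH ∧ ∀ γ h, t (φ γ h) = ρΓ γ (t h)}

variable {φ : Γ →* MulAut H} (ρ : H ⋊[φ] Γ →* MulAut V)

theorem apply_inr_of_mem_ker {s : oneCocycles ρ} (hs : s ∈ (restrictCocycles ρ inr).ker)
    (γ : Γ) : s.1 (inr γ) = 1 :=
  congrFun (congrArg Subtype.val hs) γ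

theorem apply_eq_apply_inl_left {s : oneCocycles ρ} (hs : s ∈ (restrictCocycles ρ inr).ker)
    (k : H ⋊[φ] Γ) : s.1 k = s.1 (inl k.left) := by
  conv_lhs => rw [← inl_left_mul_inr_right k]
  rw [s.2, apply_inr_of_mem_ker ρ hs, map_one, mul_one]

theorem apply_inl_aut_of_mem_ker {s : oneCocycles ρ} (hs : s ∈ (restrictCocycles ρ inr).ker)
    (γ : Γ) (h : H) : s.1 (inl (φ γ h)) = ρ (inr γ) (s.1 (inl h)) := by
  rw [inl_aut, s.2, s.2, apply_inr_of_mem_ker ρ hs, apply_inr_of_mem_ker ρ hs, map_one, mul_one,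
    one_mul]

theorem apply_left_mem_oneCocycles {t : H → V}
    (ht : t ∈ equivariantOneCocycles (ρ.comp inl) φ (ρ.comp inr)) :
    (fun k : H ⋊[φ] Γ => t k.left) ∈ oneCocycles ρ := by
  intro k k'
  simp only [mul_left]
  rw [ht.1, ht.2, MonoidHom.comp_apply, MonoidHom.comp_apply, ← MulAut.mul_apply, ← map_mul,
    inl_left_mul_inr_right]

def kerRestrictInrEquiv :
    (restrictCocycles ρ inr).ker ≃ equivariantOneCocycles (ρ.comp inl) φ (ρ.comp inr) where
  toFun s := ⟨(restrictCocycles ρ inl s.1).1, (restrictCocycles ρ inl s.1).2,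
    apply_inl_aut_of_mem_ker ρ s.2⟩
  invFun t := ⟨⟨_, apply_left_mem_oneCocycles ρ t.2⟩,
    Subtype.ext (funext fun _ => oneCocycles_apply_one _ t.2.1)⟩
  left_inv s :=
    Subtype.ext (Subtype.ext (funext fun k => (apply_eq_apply_inl_left ρ s.2 k).symm))
  right_inv _ := rfl

end SemidirectProduct

section Extension

variable {G H V : Type*} [Group G] [Group H] [CommGroup V] {i : V →* G} {p : G →* H}
  {ρH : H →* MulAut V}

theorem exists_eq_mul_of_fixes (hp : Function.Surjective p) (hker : p.ker ≤ i.range)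
    {e : G →* G} (hV : ∀ v, e (i v) = i v) (hH : ∀ g, p (e g) = p g) :
    ∃ t : H → V, ∀ g, e g = i (t (p g)) * g := by
  suffices ∀ h, ∃ v, ∀ g, p g = h → e g = i v * g by
    choose t ht using this
    exact ⟨t, fun g => ht _ g rfl⟩
  intro h
  obtain ⟨g₀, rfl⟩ := hp h
  obtain ⟨v, hv⟩ := hker (show e g₀ * g₀⁻¹ ∈ p.ker by simp [MonoidHom.mem_ker, hH])
  refine ⟨v, fun g hg => ?_⟩
  obtain ⟨w, hw⟩ := hker (show g₀⁻¹ * g ∈ p.ker by simp [MonoidHom.mem_ker, hg])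
  calc e g = e (g₀ * i w) := by rw [hw, mul_inv_cancel_left]
    _ = i v * g := by rw [map_mul, hV, hv, hw]; group

theorem mem_oneCocycles_of_eq_mul (hconj : ∀ g v, g * i v * g⁻¹ = i (ρH (p g) v))
    (hi : Function.Injective i) (hp : Function.Surjective p)
    {e : G →* G} {t : H → V} (ht : ∀ g, e g = i (t (p g)) * g) : t ∈ oneCocycles ρH := by
  intro x y
  obtain ⟨g, rfl⟩ := hp x
  obtain ⟨g', rfl⟩ := hp y
  apply hi
  have he := map_mul e g g'
  rw [ht, ht, ht, map_mul p] at he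
  calc i (t (p g * p g')) = i (t (p g * p g')) * (g * g') * (g * g')⁻¹ := by group
    _ = i (t (p g)) * (g * i (t (p g')) * g⁻¹) := by rw [he]; group
    _ = i (t (p g) * ρH (p g) (t (p g'))) := by rw [hconj, map_mul]

/-- The cocycle identity is exactly what makes `g ↦ i (t (p g)) * g` multiplicative; its inverse
is the twist by `t⁻¹`. -/
def twistHom (hpi : ∀ v, p (i v) = 1) (hconj : ∀ g v, g * i v * g⁻¹ = i (ρH (p g) v)) :
    oneCocycles ρH →* MulAut G where
  toFun t :=
    { toFun g := i (t.1 (p g)) * g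
      invFun g := i (t.1 (p g))⁻¹ * g
      left_inv g := by simp [hpi]
      right_inv g := by simp [hpi]
      map_mul' g g' := by
        simp only [map_mul, t.2 (p g) (p g'), ← hconj]
        group }
  map_one' := by ext; simp
  map_mul' t t' := by
    ext
    simp [hpi, mul_assoc]

section Twist

variable (hpi : ∀ v, p (i v) = 1) (hconj : ∀ g v, g * i v * g⁻¹ = i (ρH (p g) v))

theorem twistHom_apply (t : oneCocycles ρH) (g : G) :
    twistHom hpi hconj t g = i (t.1 (p g)) * g :=
  rfl

theorem twistHom_injective (hi : Function.Injective i) (hp : Function.Surjective p) :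
    Function.Injective (twistHom hpi hconj) := by
  intro t t' htt'
  ext x
  obtain ⟨g, rfl⟩ := hp x
  exact hi (mul_right_cancel (MulEquiv.congr_fun htt' g))

theorem mem_range_twistHom_iff (hi : Function.Injective i) (hp : Function.Surjective p)
    (hker : p.ker ≤ i.range) {e : MulAut G} :
    e ∈ (twistHom hpi hconj).range ↔ (∀ v, e (i v) = i v) ∧ ∀ g, p (e g) = p g := by
  constructor
  · rintro ⟨t, rfl⟩
    exact ⟨fun v => by simp [twistHom_apply, hpi, oneCocycles_apply_one ρH t.2],
      fun g => by simp [twistHom_apply, hpi]⟩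
  · rintro ⟨hV, hH⟩
    obtain ⟨t, ht⟩ := exists_eq_mul_of_fixes hp hker (e := e.toMonoidHom) hV hH
    exact ⟨⟨t, mem_oneCocycles_of_eq_mul hconj hi hp ht⟩, MulEquiv.ext fun g => (ht g).symm⟩

theorem twistHom_commute_iff (hi : Function.Injective i) (hp : Function.Surjective p)
    {Γ : Type*} [Group Γ] {φ : Γ →* MulAut H} {ρΓ : Γ →* MulAut V} {act : Γ →* MulAut G}
    (hpe : ∀ γ g, p (act γ g) = φ γ (p g)) (hact : ∀ γ v, act γ (i v) = i (ρΓ γ v))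
    (t : oneCocycles ρH) (γ : Γ) :
    (∀ g, twistHom hpi hconj t (act γ g) = act γ (twistHom hpi hconj t g)) ↔
      ∀ h, t.1 (φ γ h) = ρΓ γ (t.1 h) := by
  simp only [twistHom_apply, hpe, map_mul, hact, mul_left_inj, hi.eq_iff]
  exact (hp.forall (p := fun h => t.1 (φ γ h) = ρΓ γ (t.1 h))).symm

end Twist

theorem card_equivariant_automorphisms_eq (hi : Function.Injective i)
    (hp : Function.Surjective p) (hex : i.range = p.ker)
    (hconj : ∀ g v, g * i v * g⁻¹ = i (ρH (p g) v))
    {Γ : Type*} [Group Γ] {φ : Γ →* MulAut H} {ρΓ : Γ →* MulAut V} {act : Γ →* MulAut G}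
    (hpe : ∀ γ g, p (act γ g) = φ γ (p g)) (hact : ∀ γ v, act γ (i v) = i (ρΓ γ v)) :
    Nat.card {e : G ≃* G // (∀ γ g, e (act γ g) = act γ (e g)) ∧
        (∀ v, e (i v) = i v) ∧ ∀ g, p (e g) = p g} =
      Nat.card (equivariantOneCocycles ρH φ ρΓ) := by
  have hpi : ∀ v, p (i v) = 1 := fun v => hex.le ⟨v, rfl⟩
  have hcomm := twistHom_commute_iff hpi hconj hi hp hpe hact
  have hrange := fun e => mem_range_twistHom_iff hpi hconj hi hp hex.ge (e := e)
  refine (Nat.card_eq_of_bijective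
    (fun t => ⟨twistHom hpi hconj ⟨t.1, t.2.1⟩, fun γ => (hcomm _ γ).2 (t.2.2 γ),
      (hrange _).1 ⟨_, rfl⟩⟩) ⟨fun t t' htt' => ?_, ?_⟩).symm
  · exact Subtype.ext (congrArg (fun s : oneCocycles ρH => s.1)
      (twistHom_injective hpi hconj hi hp (congrArg Subtype.val htt')))
  · rintro ⟨e, he, hfix⟩
    obtain ⟨t, rfl⟩ := (hrange e).2 hfix
    exact ⟨⟨t.1, t.2, fun γ => (hcomm t γ).1 (he γ)⟩, rfl⟩

end Extension

end Stmt10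

open Stmt10 SemidirectProduct in
theorem stmt_10_general (Γ : Type*) [Group Γ] [Finite Γ] (H : Type*) [Group H]
    (φ : Γ →* MulAut H) (V : Type*) [CommGroup V] [Finite V]
    (ρ : (H ⋊[φ] Γ) →* MulAut V)
    (hcop : Nat.Coprime (Nat.card V * Nat.card H) (Nat.card Γ))
    (G : Type*) [Group G] (act : Γ →* MulAut G) (i : V →* G) (p : G →* H)
    (hi : Function.Injective i) (hp : Function.Surjective p) (hex : i.range = p.ker)
    (hpe : ∀ (γ : Γ) (g : G), p (act γ g) = φ γ (p g))
    (hconj : ∀ (g : G) (v : V), g * i v * g⁻¹ = i (ρ (SemidirectProduct.inl (p g)) v))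
    (hact : ∀ (γ : Γ) (v : V), act γ (i v) = i (ρ (SemidirectProduct.inr γ) v)) :
    Nat.card {e : G ≃* G //
        (∀ (γ : Γ) (g : G), e (act γ g) = act γ (e g)) ∧
        (∀ v : V, e (i v) = i v) ∧ (∀ g : G, p (e g) = p g)} *
      Nat.card {v : V // ∀ k : H ⋊[φ] Γ, ρ k v = v}
    = Nat.card (H1 ρ) *
        Nat.card {v : V // ∀ γ : Γ, ρ (SemidirectProduct.inr γ) v = v} := by
  have hZΓ := oneCocycles_le_oneCoboundaries_of_coprime (ρ.comp inr)
    (Nat.Coprime.coprime_mul_right hcop)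
  have hZ : Nat.card (oneCocycles ρ) = Nat.card (oneCoboundaries (ρ.comp inr)) *
      Nat.card (equivariantOneCocycles (ρ.comp inl) φ (ρ.comp inr)) := by
    rw [card_oneCocycles_eq_mul_card_ker ρ inr hZΓ, Nat.card_congr (kerRestrictInrEquiv ρ)]
  have hBK := card_oneCoboundaries_mul_card_fixedPoints ρ
  have hBΓ := card_oneCoboundaries_mul_card_fixedPoints (ρ.comp inr)
  have hV : 0 < Nat.card V := Nat.card_pos
  rw [card_equivariant_automorphisms_eq (ρH := ρ.comp inl) (ρΓ := ρ.comp inr)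
    hi hp hex hconj hpe hact]
  apply Nat.eq_of_mul_eq_mul_right (Nat.mul_pos (Nat.pos_of_mul_pos_right (hBK ▸ hV))
    (Nat.pos_of_mul_pos_right (hBΓ ▸ hV)))
  calc _ = Nat.card (oneCocycles ρ) * Nat.card V := by rw [hZ, ← hBK]; ring
    _ = _ := by
      rw [card_oneCocycles_eq_card_H1_mul, ← hBΓ]
      simp only [MonoidHom.comp_apply]
      ring

open Stmt10 in
/-- Let `1 → V → G → H → 1` be an extension of `Γ`-groups inducing a given `H ⋊ Γ`-action
`ρ` on the abelian group `V`, with `gcd(|V|·|H|, |Γ|) = 1`.  Then the group of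
`Γ`-equivariant automorphisms of `G` restricting to the identity on `V` and inducing the
identity on `H` has order `|H¹(H ⋊ Γ, V)| · |V^Γ| / |V^{H⋊Γ}|`. -/
theorem stmt_10 (Γ : Type*) [Group Γ] [Finite Γ] (H : Type*) [Group H] [Finite H]
    (φ : Γ →* MulAut H) (V : Type*) [CommGroup V] [Finite V]
    (ρ : (H ⋊[φ] Γ) →* MulAut V)
    (hcop : Nat.Coprime (Nat.card V * Nat.card H) (Nat.card Γ))
    (G : Type*) [Group G] [Finite G] (act : Γ →* MulAut G) (i : V →* G) (p : G →* H)
    (hi : Function.Injective i) (hp : Function.Surjective p) (hex : i.range = p.ker)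
    (hpe : ∀ (γ : Γ) (g : G), p (act γ g) = φ γ (p g))
    (hconj : ∀ (g : G) (v : V), g * i v * g⁻¹ = i (ρ (SemidirectProduct.inl (p g)) v))
    (hact : ∀ (γ : Γ) (v : V), act γ (i v) = i (ρ (SemidirectProduct.inr γ) v)) :
    Nat.card {e : G ≃* G //
        (∀ (γ : Γ) (g : G), e (act γ g) = act γ (e g)) ∧
        (∀ v : V, e (i v) = i v) ∧ (∀ g : G, p (e g) = p g)} *
      Nat.card {v : V // ∀ k : H ⋊[φ] Γ, ρ k v = v}
    = Nat.card (H1 ρ) *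
        Nat.card {v : V // ∀ γ : Γ, ρ (SemidirectProduct.inr γ) v = v} :=
  stmt_10_general Γ H φ V ρ hcop G act i p hi hp hex hpe hconj hact
end

section
/- Let Π be a finite group and V an irreducible representation of Π over 𝔽₂ that is 𝔽₂-orthogonal, i.e. admits a nonzero Π-invariant element of Sym² V. Then the map induced by Δ(x ⊗ y) = x ⊗ y + y ⊗ x from the Π-invariants of Sym² V to the Π-invariants of ∧₂ V is surjective, where ∧₂ V ⊆ V ⊗ V is the image of Δ on V ⊗ V. -/
/-!
Write `Δ = 1 + swap` on `V ⊗ V`, so that `∧₂V = range Δ` and the invariants of `Sym² V` are the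
`q` with `g • q - q ∈ range Δ` for all `g`. Contraction identifies invariants of `V ⊗ V` with
`Π`-maps `V* → V`; as `V` is irreducible, a nonzero invariant `ω` gives an isomorphism, so every
invariant is `(k ⊗ 1) ω` for some `k` in the commutant `κ = End_Π(V)`. By Schur and Wedderburn `κ`
is a finite field, and this commutativity shows that `k ⊗ 1 = 1 ⊗ k` on invariants as soon as
`ω` and `(k ⊗ 1) ω` are symmetric.

Let `w ∈ (∧₂V)^Π` and write `w = (k ⊗ 1) ω`. If some invariant `u` has `Δ u ≠ 0`, take
`ω = Δ u`; then `w = Δ ((k ⊗ 1) u)`. Otherwise every invariant is symmetric; take `ω = Δ q₀` for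
the given invariant `q₀` of `Sym² V` and `k = l²` (squaring is onto in characteristic `2`); then
`w = Δ ((l ⊗ l) q₀)`. If `Δ q₀ = 0`, exactness of `0 → V → Sym² V → ∧₂V → 0` gives
`q₀ ≡ v ⊗ v` modulo `∧₂V` with `v ≠ 0` fixed by `Π`, so `V = 𝔽₂ v` and `∧₂V = 0`.
-/

open TensorProduct

theorem CharTwo.add_self_eq_zero_of_module (R : Type*) {M : Type*} [Semiring R] [CharP R 2]
    [AddCommMonoid M] [Module R M] (x : M) : x + x = 0 := by
  rw [← two_smul R x, CharTwo.two_eq_zero, zero_smul]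

namespace TensorProduct

section Symmetrize

variable (R M : Type*) [CommRing R] [AddCommGroup M] [Module R M]

def symmetrize : M ⊗[R] M →ₗ[R] M ⊗[R] M :=
  LinearMap.id + (TensorProduct.comm R M M).toLinearMap

variable {R M}

@[simp] theorem symmetrize_apply (t : M ⊗[R] M) :
    symmetrize R M t = t + TensorProduct.comm R M M t := rfl

theorem span_tmul_add_tmul_eq_range_symmetrize :
    Submodule.span R {t : M ⊗[R] M | ∃ x y : M, t = x ⊗ₜ y + y ⊗ₜ x} =
      LinearMap.range (symmetrize R M) := by
  rw [LinearMap.range_eq_map, ← span_tmul_eq_top, Submodule.map_span]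
  congr 1
  ext t
  simp [eq_comm]

theorem comm_symmetrize (t : M ⊗[R] M) :
    TensorProduct.comm R M M (symmetrize R M t) = symmetrize R M t := by
  simp [add_comm]

theorem map_symmetrize (f : M →ₗ[R] M) (t : M ⊗[R] M) :
    map f f (symmetrize R M t) = symmetrize R M (map f f t) := by
  simp [map_comm]

theorem map_mem_range_symmetrize (f : M →ₗ[R] M) {t : M ⊗[R] M}
    (ht : t ∈ LinearMap.range (symmetrize R M)) :
    map f f t ∈ LinearMap.range (symmetrize R M) := by
  obtain ⟨s, rfl⟩ := ht
  exact ⟨map f f s, (map_symmetrize f s).symm⟩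

theorem add_tmul_add_self (x y : M) :
    (x + y) ⊗ₜ[R] (x + y) = x ⊗ₜ x + y ⊗ₜ y + symmetrize R M (x ⊗ₜ y) := by
  simp only [symmetrize_apply, comm_tmul, tmul_add, add_tmul]
  abel

variable [CharP R 2]

theorem symmetrize_eq_zero_of_comm_eq {t : M ⊗[R] M} (ht : TensorProduct.comm R M M t = t) :
    symmetrize R M t = 0 := by
  rw [symmetrize_apply, ht, CharTwo.add_self_eq_zero_of_module R]

theorem comm_eq_of_symmetrize_eq_zero {t : M ⊗[R] M} (ht : symmetrize R M t = 0) :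
    TensorProduct.comm R M M t = t :=
  (neg_eq_of_add_eq_zero_right ht).symm.trans
    (neg_eq_of_add_eq_zero_right (CharTwo.add_self_eq_zero_of_module R t))

theorem symmetrize_eq_zero_of_mem_range {t : M ⊗[R] M}
    (ht : t ∈ LinearMap.range (symmetrize R M)) : symmetrize R M t = 0 := by
  obtain ⟨s, rfl⟩ := ht
  exact symmetrize_eq_zero_of_comm_eq (comm_symmetrize s)

theorem symmetrize_eq_zero_of_span_singleton_eq_top {v : M} (hv : Submodule.span R {v} = ⊤) :
    symmetrize R M = 0 := by
  refine TensorProduct.ext' fun x y => symmetrize_eq_zero_of_comm_eq ?_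
  obtain ⟨a, rfl⟩ := Submodule.mem_span_singleton.1 (hv ▸ Submodule.mem_top : x ∈ _)
  obtain ⟨b, rfl⟩ := Submodule.mem_span_singleton.1 (hv ▸ Submodule.mem_top : y ∈ _)
  simp [smul_tmul', smul_smul, mul_comm]

end Symmetrize

section Field

variable {F V : Type*} [Field F] [AddCommGroup V] [Module F V]

theorem eq_zero_of_tmul_self_mem_range_symmetrize [CharP F 2] {v : V}
    (hv : v ⊗ₜ[F] v ∈ LinearMap.range (symmetrize F V)) : v = 0 := by
  by_contra hv0
  obtain ⟨φ, hφ⟩ : ∃ φ : Module.Dual F V, φ v ≠ 0 := by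
    simpa using mt (Module.forall_dual_apply_eq_zero_iff F v).1 hv0
  let L := LinearMap.mul' F F ∘ₗ map φ φ
  have hL : L ∘ₗ symmetrize F V = 0 := by
    ext x y
    simp [L, mul_comm, CharTwo.add_self_eq_zero]
  obtain ⟨t, ht⟩ := hv
  have := LinearMap.congr_fun hL t
  simp only [LinearMap.comp_apply, ht, LinearMap.zero_apply, L, map_tmul,
    LinearMap.mul'_apply, mul_self_eq_zero] at this
  exact hφ this

variable [FiniteDimensional F V]

theorem mem_range_symmetrize_sup_span_tmul_self {t : V ⊗[F] V}
    (ht : TensorProduct.comm F V V t = t) :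
    t ∈ LinearMap.range (symmetrize F V) ⊔ Submodule.span F {s | ∃ v : V, s = v ⊗ₜ v} := by
  let b := Module.finBasis F V
  let B := b.tensorProduct b
  let upper := B.constr F fun p => if p.1 < p.2 then B p else 0
  let diag := B.constr F fun p => if p.1 = p.2 then B p else 0
  have hcomm : ∀ i j, TensorProduct.comm F V V (B (i, j)) = B (j, i) := fun i j => by
    simp [B, Module.Basis.tensorProduct_apply]
  have hsplit : LinearMap.id = upper + (TensorProduct.comm F V V).toLinearMap ∘ₗ upper ∘ₗ
      (TensorProduct.comm F V V).toLinearMap + diag := by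
    refine B.ext fun ⟨i, j⟩ => ?_
    simp only [LinearMap.id_apply, LinearMap.add_apply, LinearMap.comp_apply,
      LinearEquiv.coe_coe, hcomm, upper, diag, Module.Basis.constr_basis]
    rcases lt_trichotomy i j with h | rfl | h
    · simp [h, h.ne, h.not_gt]
    · simp
    · simp [h, h.ne', h.not_gt, hcomm]
  have hdiag : Submodule.comap diag (Submodule.span F {s | ∃ v : V, s = v ⊗ₜ v}) = ⊤ := by
    rw [eq_top_iff, ← B.span_eq, Submodule.span_le]
    rintro _ ⟨⟨i, j⟩, rfl⟩
    simp only [SetLike.mem_coe, Submodule.mem_comap, diag, Module.Basis.constr_basis]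
    split_ifs with h
    · exact Submodule.subset_span ⟨b i, by simp [B, h, Module.Basis.tensorProduct_apply]⟩
    · exact zero_mem _
  have ht' : t = symmetrize F V (upper t) + diag t := by
    simpa [ht, add_assoc] using LinearMap.congr_fun hsplit t
  rw [ht']
  exact Submodule.add_mem_sup (LinearMap.mem_range_self _ _)
    (Submodule.mem_comap.1 (hdiag ▸ Submodule.mem_top))

end Field

section ZModTwo

variable {V : Type*} [AddCommGroup V] [Module (ZMod 2) V]

theorem exists_add_tmul_self_mem_range_symmetrize_of_mem_span {t : V ⊗[ZMod 2] V}
    (ht : t ∈ Submodule.span (ZMod 2) {s | ∃ v : V, s = v ⊗ₜ v}) :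
    ∃ v : V, t + v ⊗ₜ v ∈ LinearMap.range (symmetrize (ZMod 2) V) := by
  induction ht using Submodule.span_induction with
  | mem s hs =>
    obtain ⟨v, rfl⟩ := hs
    exact ⟨v, by simp [ZModModule.add_self]⟩
  | zero => exact ⟨0, by simp⟩
  | add a c _ _ ha hc =>
    obtain ⟨v₁, h₁⟩ := ha
    obtain ⟨v₂, h₂⟩ := hc
    refine ⟨v₁ + v₂, ?_⟩
    rw [add_tmul_add_self, show a + c + (v₁ ⊗ₜ v₁ + v₂ ⊗ₜ v₂ + symmetrize _ V (v₁ ⊗ₜ v₂))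
      = (a + v₁ ⊗ₜ v₁) + (c + v₂ ⊗ₜ v₂) + symmetrize _ V (v₁ ⊗ₜ v₂) by abel]
    exact add_mem (add_mem h₁ h₂) (LinearMap.mem_range_self _ _)
  | smul r a _ ha =>
    obtain rfl | rfl : r = 0 ∨ r = 1 := by decide +revert
    · exact ⟨0, by simp⟩
    · simpa using ha

theorem exists_add_tmul_self_mem_range_symmetrize [FiniteDimensional (ZMod 2) V]
    {t : V ⊗[ZMod 2] V} (ht : TensorProduct.comm (ZMod 2) V V t = t) :
    ∃ v : V, t + v ⊗ₜ v ∈ LinearMap.range (symmetrize (ZMod 2) V) := by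
  obtain ⟨a, ha, d, hd, rfl⟩ := Submodule.mem_sup.1 (mem_range_symmetrize_sup_span_tmul_self ht)
  obtain ⟨v, hv⟩ := exists_add_tmul_self_mem_range_symmetrize_of_mem_span hd
  exact ⟨v, add_assoc a d _ ▸ add_mem ha hv⟩

end ZModTwo

variable (F V : Type*) [Field F] [AddCommGroup V] [Module F V] [FiniteDimensional F V]

noncomputable def toDualHom : V ⊗[F] V ≃ₗ[F] (Module.Dual F V →ₗ[F] V) :=
  TensorProduct.comm F V V ≪≫ₗ TensorProduct.congr (Module.evalEquiv F V) (LinearEquiv.refl F V)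
    ≪≫ₗ dualTensorHomEquiv F (Module.Dual F V) V

variable {F V}

@[simp] theorem toDualHom_tmul (x y : V) (l : Module.Dual F V) :
    toDualHom F V (x ⊗ₜ y) l = l y • x := by
  simp [toDualHom]

theorem toDualHom_map (f h : V →ₗ[F] V) (t : V ⊗[F] V) :
    toDualHom F V (map f h t) = f ∘ₗ toDualHom F V t ∘ₗ Module.Dual.transpose h := by
  induction t using TensorProduct.induction_on with
  | zero => ext; simp
  | tmul x y => ext; simp [Module.Dual.transpose_apply]
  | add a c ha hc => simp [ha, hc, LinearMap.add_comp, LinearMap.comp_add]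

end TensorProduct

namespace Representation

section Field

variable {F G V : Type*} [Field F] [Group G] [AddCommGroup V] [Module F V]

theorem isIrreducible_of_forall_submodule [Nontrivial V] (ρ : Representation F G V)
    (h : ∀ W : Submodule F V, (∀ g : G, W.map (ρ g) ≤ W) → W = ⊥ ∨ W = ⊤) :
    ρ.IsIrreducible where
  exists_pair_ne := ⟨⊥, ⊤, fun h => bot_ne_top (congrArg Subrepresentation.toSubmodule h)⟩
  eq_bot_or_eq_top σ := by
    refine (h σ.toSubmodule fun g => ?_).imp (fun h => ?_) (fun h => ?_)
    · exact Submodule.map_le_iff_le_comap.mpr fun v hv => σ.apply_mem_toSubmodule g hv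
    · exact Subrepresentation.toSubmodule_injective h
    · exact Subrepresentation.toSubmodule_injective h

abbrev commutant (ρ : Representation F G V) : Subalgebra F (Module.End F V) :=
  Subalgebra.centralizer F (Set.range ρ)

theorem mem_commutant_iff (ρ : Representation F G V) {k : Module.End F V} :
    k ∈ ρ.commutant ↔ ∀ g, k ∘ₗ ρ g = ρ g ∘ₗ k := by
  simp only [Subalgebra.mem_centralizer_iff, Set.forall_mem_range, Module.End.mul_eq_comp]
  exact forall_congr' fun g => eq_comm

variable {ρ : Representation F G V}

theorem map_mem_invariants {f h : Module.End F V} (hf : f ∈ ρ.commutant) (hh : h ∈ ρ.commutant)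
    {t : V ⊗[F] V} (ht : t ∈ (ρ.tprod ρ).invariants) : map f h t ∈ (ρ.tprod ρ).invariants := by
  intro g
  rw [mem_commutant_iff] at hf hh
  rw [tprod_apply, map_map, ← hf, ← hh, ← map_map, ← tprod_apply, ht g]

theorem comm_mem_invariants {t : V ⊗[F] V} (ht : t ∈ (ρ.tprod ρ).invariants) :
    _root_.TensorProduct.comm F V V t ∈ (ρ.tprod ρ).invariants := by
  intro g
  rw [tprod_apply, map_comm, ← tprod_apply, ht g]

theorem symmetrize_mem_invariants [CharP F 2] {q : V ⊗[F] V}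
    (hq : ∀ g, (ρ.tprod ρ) g q - q ∈ LinearMap.range (symmetrize F V)) :
    symmetrize F V q ∈ (ρ.tprod ρ).invariants := by
  intro g
  rw [tprod_apply, map_symmetrize, ← tprod_apply, ← sub_add_cancel ((ρ.tprod ρ) g q) q, map_add,
    symmetrize_eq_zero_of_mem_range (hq g), zero_add]

theorem bijective_of_mem_commutant [ρ.IsIrreducible] {k : Module.End F V}
    (hk : k ∈ ρ.commutant) (hk0 : k ≠ 0) : Function.Bijective k :=
  (IsIrreducible.bijective_or_eq_zero ⟨k, (mem_commutant_iff ρ).1 hk⟩).resolve_right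
    fun h => hk0 (congrArg IntertwiningMap.toLinearMap h)

variable [FiniteDimensional F V]

theorem toDualHom_comp_dual {ω : V ⊗[F] V} (hω : ω ∈ (ρ.tprod ρ).invariants) (g : G) :
    toDualHom F V ω ∘ₗ ρ.dual g = ρ g ∘ₗ toDualHom F V ω := by
  conv_lhs => rw [← hω g, tprod_apply, toDualHom_map]
  ext l
  simp [dual_apply, Module.Dual.transpose_apply, LinearMap.comp_assoc, ← Module.End.mul_eq_comp,
    ← map_mul, Module.End.one_eq_id]

theorem exists_mem_commutant_map_id_eq [ρ.IsIrreducible] {ω u : V ⊗[F] V}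
    (hω : ω ∈ (ρ.tprod ρ).invariants) (hω0 : ω ≠ 0) (hu : u ∈ (ρ.tprod ρ).invariants) :
    ∃ k ∈ ρ.commutant, map k LinearMap.id ω = u := by
  have hsurj : Function.Surjective (toDualHom F V ω) :=
    (IsIrreducible.surjective_or_eq_zero ⟨_, toDualHom_comp_dual hω⟩).resolve_right fun h =>
      hω0 ((toDualHom F V).map_eq_zero_iff.1 (congrArg IntertwiningMap.toLinearMap h))
  have hinj : Function.Injective (toDualHom F V ω) :=
    (LinearMap.injective_iff_surjective_of_finrank_eq_finrank Subspace.dual_finrank_eq).2 hsurj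
  let e := LinearEquiv.ofBijective _ ⟨hinj, hsurj⟩
  have he : ∀ l, e.symm (toDualHom F V ω l) = l := e.symm_apply_apply
  refine ⟨toDualHom F V u ∘ₗ e.symm, (mem_commutant_iff ρ).2 fun g => ?_, ?_⟩
  · rw [← LinearMap.cancel_right hsurj]
    ext l
    rw [LinearMap.comp_apply, LinearMap.comp_apply, ← LinearMap.comp_apply (ρ g),
      ← toDualHom_comp_dual hω]
    simpa [he] using LinearMap.congr_fun (toDualHom_comp_dual hu g) l
  · apply (toDualHom F V).injective
    ext l
    simp [toDualHom_map, Module.Dual.transpose_apply, he]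

theorem isField_commutant [Finite F] [Nontrivial V] [ρ.IsIrreducible] :
    IsField ρ.commutant := by
  have : NoZeroDivisors ρ.commutant := ⟨fun {a b} hab => by
    refine or_iff_not_imp_left.2 fun ha => Subtype.ext (LinearMap.ext fun v => ?_)
    refine (bijective_of_mem_commutant a.2 fun h => ha (Subtype.ext h)).1 ?_
    simpa using LinearMap.congr_fun (congrArg Subtype.val hab) v⟩
  have : IsDomain ρ.commutant := NoZeroDivisors.to_isDomain _
  have : Finite (Module.End F V) := Module.finite_of_finite F
  exact Finite.isDomain_to_isField _

theorem mul_comm_of_mem_commutant [Finite F] [Nontrivial V] [ρ.IsIrreducible]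
    {a b : Module.End F V} (ha : a ∈ ρ.commutant) (hb : b ∈ ρ.commutant) : a * b = b * a :=
  congrArg Subtype.val ((isField_commutant (ρ := ρ)).mul_comm ⟨a, ha⟩ ⟨b, hb⟩)

theorem exists_mem_commutant_mul_self_eq [Finite F] [CharP F 2] [Nontrivial V]
    [ρ.IsIrreducible] {k : Module.End F V} (hk : k ∈ ρ.commutant) :
    ∃ l ∈ ρ.commutant, l * l = k := by
  have : Finite (Module.End F V) := Module.finite_of_finite F
  let := (isField_commutant (ρ := ρ)).toField
  have : CharP ρ.commutant 2 := charP_of_injective_algebraMap (algebraMap F _).injective 2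
  obtain ⟨l, hl⟩ := FiniteField.isSquare_of_char_two (ringChar.eq _ 2) (⟨k, hk⟩ : ρ.commutant)
  exact ⟨l, l.2, congrArg Subtype.val hl.symm⟩

theorem map_id_left_eq_map_id_right [Finite F] [Nontrivial V] [ρ.IsIrreducible]
    {ω : V ⊗[F] V} (hω : ω ∈ (ρ.tprod ρ).invariants) (hω0 : ω ≠ 0)
    (hωc : _root_.TensorProduct.comm F V V ω = ω) {k : Module.End F V} (hk : k ∈ ρ.commutant)
    (hkω : _root_.TensorProduct.comm F V V (map k LinearMap.id ω) = map k LinearMap.id ω)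
    {u : V ⊗[F] V} (hu : u ∈ (ρ.tprod ρ).invariants) :
    map LinearMap.id k u = map k LinearMap.id u := by
  obtain ⟨m, hm, rfl⟩ := exists_mem_commutant_map_id_eq hω hω0 hu
  have hkω' : map LinearMap.id k ω = map k LinearMap.id ω := by
    rw [← hkω, ← map_comm, hωc]
  calc map LinearMap.id k (map m LinearMap.id ω) = map m LinearMap.id (map LinearMap.id k ω) := by
        simp only [map_map, LinearMap.id_comp, LinearMap.comp_id]
    _ = map m LinearMap.id (map k LinearMap.id ω) := by rw [hkω']
    _ = map k LinearMap.id (map m LinearMap.id ω) := by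
        simp only [map_map, ← Module.End.mul_eq_comp, mul_comm_of_mem_commutant hm hk]

theorem exists_mem_invariants_symmetrize_eq [Finite F] [Nontrivial V] [ρ.IsIrreducible]
    {u : V ⊗[F] V} (hu : u ∈ (ρ.tprod ρ).invariants) (hu0 : symmetrize F V u ≠ 0)
    {w : V ⊗[F] V} (hw : w ∈ (ρ.tprod ρ).invariants)
    (hwc : _root_.TensorProduct.comm F V V w = w) :
    ∃ q ∈ (ρ.tprod ρ).invariants, symmetrize F V q = w := by
  have he : symmetrize F V u ∈ (ρ.tprod ρ).invariants := fun g => by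
    rw [tprod_apply, map_symmetrize, ← tprod_apply, hu g]
  obtain ⟨k, hk, rfl⟩ := exists_mem_commutant_map_id_eq he hu0 hw
  refine ⟨map k LinearMap.id u, map_mem_invariants hk (Subalgebra.one_mem _) hu, ?_⟩
  rw [symmetrize_apply, ← map_comm, map_id_left_eq_map_id_right he hu0 (comm_symmetrize u) hk hwc
    (comm_mem_invariants hu), ← map_add]
  rfl

theorem exists_symmetrize_eq_of_forall_comm_eq [Finite F] [CharP F 2] [Nontrivial V]
    [ρ.IsIrreducible]
    (hsymm : ∀ u ∈ (ρ.tprod ρ).invariants, _root_.TensorProduct.comm F V V u = u)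
    {q₀ : V ⊗[F] V} (hq₀ : ∀ g, (ρ.tprod ρ) g q₀ - q₀ ∈ LinearMap.range (symmetrize F V))
    (hq₀0 : symmetrize F V q₀ ≠ 0) {w : V ⊗[F] V} (hw : w ∈ (ρ.tprod ρ).invariants) :
    ∃ q, (∀ g, (ρ.tprod ρ) g q - q ∈ LinearMap.range (symmetrize F V)) ∧
      symmetrize F V q = w := by
  have hω := symmetrize_mem_invariants hq₀
  obtain ⟨k, hk, rfl⟩ := exists_mem_commutant_map_id_eq hω hq₀0 hw
  obtain ⟨l, hl, rfl⟩ := exists_mem_commutant_mul_self_eq hk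
  have hlω := map_id_left_eq_map_id_right hω hq₀0 (comm_symmetrize q₀) hl
    (hsymm _ (map_mem_invariants hl (Subalgebra.one_mem _) hω)) hω
  refine ⟨map l l q₀, fun g => ?_, ?_⟩
  · rw [tprod_apply, map_map, ← (mem_commutant_iff ρ).1 hl g, ← map_map, ← tprod_apply,
      ← map_sub]
    exact map_mem_range_symmetrize l (hq₀ g)
  · rw [← map_symmetrize]
    calc map l l (symmetrize F V q₀)
        = map l LinearMap.id (map LinearMap.id l (symmetrize F V q₀)) := by
          simp only [map_map, LinearMap.id_comp, LinearMap.comp_id]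
      _ = map l LinearMap.id (map l LinearMap.id (symmetrize F V q₀)) := by rw [hlω]
      _ = map (l * l) LinearMap.id (symmetrize F V q₀) := by
          simp only [map_map, LinearMap.comp_id, Module.End.mul_eq_comp]

end Field

variable {G V : Type*} [Group G] [AddCommGroup V] [Module (ZMod 2) V]
  [FiniteDimensional (ZMod 2) V] {ρ : Representation (ZMod 2) G V}

theorem symmetrize_eq_zero_of_symmetrize_eq_zero [ρ.IsIrreducible] {q : V ⊗[ZMod 2] V}
    (hq : q ∉ LinearMap.range (symmetrize (ZMod 2) V))
    (hqinv : ∀ g, (ρ.tprod ρ) g q - q ∈ LinearMap.range (symmetrize (ZMod 2) V))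
    (hq0 : symmetrize (ZMod 2) V q = 0) : symmetrize (ZMod 2) V = 0 := by
  obtain ⟨v, hv⟩ := exists_add_tmul_self_mem_range_symmetrize (comm_eq_of_symmetrize_eq_zero hq0)
  have hv0 : v ≠ 0 := by
    rintro rfl
    exact hq (by simpa using hv)
  have hfix : ∀ g, ρ g v = v := fun g => by
    have h1 : ρ g v ⊗ₜ ρ g v - v ⊗ₜ v ∈ LinearMap.range (symmetrize (ZMod 2) V) := by
      convert sub_mem (sub_mem (map_mem_range_symmetrize (ρ g) hv) (hqinv g)) hv using 1
      simp only [map_add, map_tmul, tprod_apply]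
      abel
    have h2 : (ρ g v + v) ⊗ₜ (ρ g v + v) ∈ LinearMap.range (symmetrize (ZMod 2) V) := by
      rw [add_tmul_add_self, ← ZModModule.sub_eq_add (ρ g v ⊗ₜ _)]
      exact add_mem h1 (LinearMap.mem_range_self _ _)
    simpa [ZModModule.neg_eq_self] using
      eq_neg_of_add_eq_zero_left (eq_zero_of_tmul_self_mem_range_symmetrize h2)
  let W : Subrepresentation ρ := ⟨Submodule.span (ZMod 2) {v}, fun g x hx => by
    obtain ⟨a, rfl⟩ := Submodule.mem_span_singleton.1 hx
    simpa [hfix g] using Submodule.smul_mem _ a (Submodule.mem_span_singleton_self v)⟩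
  rcases IsSimpleOrder.eq_bot_or_eq_top W with h | h
  · have hvW : v ∈ W.toSubmodule := Submodule.mem_span_singleton_self v
    rw [h] at hvW
    exact (hv0 ((Submodule.mem_bot _).1 hvW)).elim
  · exact symmetrize_eq_zero_of_span_singleton_eq_top (congrArg Subrepresentation.toSubmodule h)

end Representation

open Representation in
theorem stmt_12_general (G : Type*) [Group G]
    (V : Type*) [AddCommGroup V] [Module (ZMod 2) V] [FiniteDimensional (ZMod 2) V]
    [Nontrivial V]
    (ρ : Representation (ZMod 2) G V)
    (hirr : ∀ W : Submodule (ZMod 2) V, (∀ g : G, W.map (ρ g) ≤ W) → W = ⊥ ∨ W = ⊤)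
    (S : Submodule (ZMod 2) (V ⊗[ZMod 2] V))
    (hS : S = Submodule.span (ZMod 2)
      {t : V ⊗[ZMod 2] V | ∃ x y : V, t = x ⊗ₜ[ZMod 2] y + y ⊗ₜ[ZMod 2] x})
    (horth : ∃ q : V ⊗[ZMod 2] V, q ∉ S ∧
      ∀ g : G, TensorProduct.map (ρ g) (ρ g) q - q ∈ S) :
    ∀ w ∈ S, (∀ g : G, TensorProduct.map (ρ g) (ρ g) w = w) →
      ∃ q : V ⊗[ZMod 2] V,
        (∀ g : G, TensorProduct.map (ρ g) (ρ g) q - q ∈ S) ∧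
        q + (TensorProduct.comm (ZMod 2) V V) q = w := by
  rw [span_tmul_add_tmul_eq_range_symmetrize] at hS
  subst hS
  have := isIrreducible_of_forall_submodule ρ hirr
  obtain ⟨q₀, hq₀, hq₀inv⟩ := horth
  intro w hw hwinv
  by_cases hA : ∀ u ∈ (ρ.tprod ρ).invariants, symmetrize (ZMod 2) V u = 0
  · by_cases hω : symmetrize (ZMod 2) V q₀ = 0
    · obtain ⟨t, rfl⟩ := hw
      exact ⟨0, by simp, by simp [symmetrize_eq_zero_of_symmetrize_eq_zero hq₀ hq₀inv hω]⟩
    · exact exists_symmetrize_eq_of_forall_comm_eq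
        (fun u hu => comm_eq_of_symmetrize_eq_zero (hA u hu)) hq₀inv hω hwinv
  · obtain ⟨u, hu, hu0⟩ := not_forall₂.1 hA
    obtain ⟨q, hq, rfl⟩ := exists_mem_invariants_symmetrize_eq hu hu0 hwinv
      (comm_eq_of_symmetrize_eq_zero (symmetrize_eq_zero_of_mem_range hw))
    refine ⟨q, fun g => ?_, rfl⟩
    rw [show map (ρ g) (ρ g) q = q from hq g, sub_self]
    exact zero_mem _

open TensorProduct in
/-- Let `V` be an irreducible `𝔽₂`-orthogonal representation of a finite group `G` over
`𝔽₂`.  With `S = ∧₂V ⊆ V ⊗ V` the span of the `x ⊗ y + y ⊗ x` (so that `Sym² V = (V⊗V)/S`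
and `Δ q = q + swap q` induces `Sym² V → ∧₂ V`), the induced map
`(Sym² V)^G → (∧₂ V)^G` is surjective: every `G`-invariant `w ∈ ∧₂V` is `Δ q` for some
`q ∈ V ⊗ V` whose class in `Sym² V` is `G`-invariant. -/
theorem stmt_12 (G : Type*) [Group G] [Finite G]
    (V : Type*) [AddCommGroup V] [Module (ZMod 2) V] [FiniteDimensional (ZMod 2) V]
    [Nontrivial V]
    (ρ : Representation (ZMod 2) G V)
    (hirr : ∀ W : Submodule (ZMod 2) V, (∀ g : G, W.map (ρ g) ≤ W) → W = ⊥ ∨ W = ⊤)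
    (S : Submodule (ZMod 2) (V ⊗[ZMod 2] V))
    (hS : S = Submodule.span (ZMod 2)
      {t : V ⊗[ZMod 2] V | ∃ x y : V, t = x ⊗ₜ[ZMod 2] y + y ⊗ₜ[ZMod 2] x})
    (horth : ∃ q : V ⊗[ZMod 2] V, q ∉ S ∧
      ∀ g : G, TensorProduct.map (ρ g) (ρ g) q - q ∈ S) :
    ∀ w ∈ S, (∀ g : G, TensorProduct.map (ρ g) (ρ g) w = w) →
      ∃ q : V ⊗[ZMod 2] V,
        (∀ g : G, TensorProduct.map (ρ g) (ρ g) q - q ∈ S) ∧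
        q + (TensorProduct.comm (ZMod 2) V V) q = w :=
  stmt_12_general G V ρ hirr S hS horth
end

section
/- Let q ≥ 2 be a real number, ε ∈ {−1, 0, 1}, and let z, u be nonnegative integers with u > 0. Writing (q)_m = ∏_{i=1}^m(1 − q^{−i}) and (1+q^{−k−(ε+1)/2−u}) interpreted with real exponent, we have Σ_{e=0}^∞ (−1)^e q^{−(ε+1)e/2 − ue}/(q)_e · Σ_{r=0}^{z} (−1)^r q^{r(r−1)/2 − ur + zr − r²} (q)_z/((q)_{z−r}(q)_r) = ∏_{k=0}^∞ (1 + q^{−k−(ε+1)/2−u})^{−1} · ∏_{k=0}^{z−1} (1 − q^{k−u}), and all series and products converge absolutely. -/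
/-- The adjusted q-Pochhammer symbol `(q)_m = ∏_{i=1}^m (1 - q^{-i})`. -/
noncomputable def Stmt15.qpoch (q : ℝ) (m : ℕ) : ℝ :=
  ∏ i ∈ Finset.range m, (1 - q ^ (-(i + 1 : ℤ)))

/-!
Put `x = q⁻¹` and `v = -q^{-(ε+1)/2-u}`, so that `|x|, |v| < 1`. The series is Euler's
q-exponential `e_x(v) = ∑ v^e / (x;x)_e`, and the finite sum is Rothe's expansion
`∏_{k<z} (1 + x^k t) = ∑_r x^{r(r-1)/2} [z choose r]_x t^r` at `t = -q^{z-u-1}`, whose factors are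
`1 - q^{k-u}` read backwards. Euler's identity `e_x(v) = ∏_k (1 - x^k v)⁻¹` comes from the
functional equation `e_x(xv) = (1 - v) e_x(v)`: iterating it gives
`e_x(x^N v) = e_x(v) ∏_{k<N} (1 - x^k v)`, and `e_x(x^N v) → e_x(0) = 1` by dominated convergence.
-/

open Finset Filter Topology

section QBinomial

variable {R : Type*}

def qPochhammer [CommRing R] (x : R) (n : ℕ) : R := ∏ i ∈ range n, (1 - x ^ (i + 1))

@[simp]
lemma qPochhammer_zero [CommRing R] (x : R) : qPochhammer x 0 = 1 := prod_range_zero _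

lemma qPochhammer_succ [CommRing R] (x : R) (n : ℕ) :
    qPochhammer x (n + 1) = qPochhammer x n * (1 - x ^ (n + 1)) := prod_range_succ _ _

def qBinomial [CommSemiring R] (x : R) : ℕ → ℕ → R
  | _, 0 => 1
  | 0, _ + 1 => 0
  | n + 1, r + 1 => x ^ (r + 1) * qBinomial x n (r + 1) + qBinomial x n r

section CommSemiring

variable [CommSemiring R] (x : R)

@[simp]
lemma qBinomial_zero_right (n : ℕ) : qBinomial x n 0 = 1 := by
  cases n <;> rfl

lemma qBinomial_succ_succ (n r : ℕ) :
    qBinomial x (n + 1) (r + 1) = x ^ (r + 1) * qBinomial x n (r + 1) + qBinomial x n r := rfl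

lemma qBinomial_eq_zero_of_lt : ∀ {n r : ℕ}, n < r → qBinomial x n r = 0
  | 0, _ + 1, _ => rfl
  | n + 1, r + 1, h => by
    rw [qBinomial_succ_succ, qBinomial_eq_zero_of_lt (by omega), qBinomial_eq_zero_of_lt (by omega),
      mul_zero, add_zero]

@[simp]
lemma qBinomial_self (n : ℕ) : qBinomial x n n = 1 := by
  induction n with
  | zero => rfl
  | succ n ih =>
    rw [qBinomial_succ_succ, qBinomial_eq_zero_of_lt x n.lt_succ_self, ih, mul_zero, zero_add]

theorem prod_one_add_pow_mul (t : R) (n : ℕ) :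
    ∏ k ∈ range n, (1 + x ^ k * t) =
      ∑ r ∈ range (n + 1), x ^ r.choose 2 * qBinomial x n r * t ^ r := by
  induction n generalizing t with
  | zero => simp
  | succ n ih =>
    set a : ℕ → R := fun r => x ^ r.choose 2 * qBinomial x n r * (x * t) ^ r with ha
    have hterm (r : ℕ) :
        x ^ (r + 1).choose 2 * qBinomial x (n + 1) (r + 1) * t ^ (r + 1) = a (r + 1) + t * a r := by
      simp only [ha, qBinomial_succ_succ, Nat.choose_succ_succ', Nat.choose_one_right, pow_add,
        mul_pow]
      ring
    have hsum : ∑ r ∈ range (n + 1), a r = ∑ r ∈ range (n + 1), a (r + 1) + 1 := by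
      rw [← add_zero (∑ r ∈ range (n + 1), a r),
        ← show a (n + 1) = 0 by simp [ha, qBinomial_eq_zero_of_lt x n.lt_succ_self],
        ← sum_range_succ, sum_range_succ']
      simp [ha]
    calc ∏ k ∈ range (n + 1), (1 + x ^ k * t)
        = (∏ k ∈ range n, (1 + x ^ k * (x * t))) * (1 + t) := by
          rw [prod_range_succ']
          simp only [pow_succ, pow_zero, one_mul, mul_assoc]
      _ = ∑ r ∈ range (n + 1), a r + t * ∑ r ∈ range (n + 1), a r := by rw [ih]; ring
      _ = ∑ r ∈ range (n + 2), x ^ r.choose 2 * qBinomial x (n + 1) r * t ^ r := by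
          rw [sum_range_succ' _ (n + 1)]
          simp only [hterm, sum_add_distrib, mul_sum]
          rw [hsum]
          simp only [Nat.choose_zero_succ, pow_zero, qBinomial_zero_right, mul_one]
          ring

end CommSemiring

lemma qBinomial_add_mul_qPochhammer [CommRing R] (x : R) (r s : ℕ) :
    qBinomial x (r + s) r * (qPochhammer x r * qPochhammer x s) = qPochhammer x (r + s) := by
  induction r generalizing s with
  | zero => simp
  | succ r ihr =>
    induction s with
    | zero => simp
    | succ s ihs =>
      have h := ihr (s + 1)
      rw [show r + 1 + s = r + s + 1 by ring, qPochhammer_succ x r] at ihs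
      rw [show r + (s + 1) = r + s + 1 by ring, qPochhammer_succ x s] at h
      rw [show r + 1 + (s + 1) = r + s + 1 + 1 by ring, qBinomial_succ_succ, qPochhammer_succ,
        qPochhammer_succ x s, qPochhammer_succ x (r + s + 1)]
      linear_combination (x ^ (r + 1) * (1 - x ^ (s + 1))) * ihs + (1 - x ^ (r + 1)) * h

lemma qBinomial_eq_div {K : Type*} [Field K] {x : K} {n r : ℕ} (hr : r ≤ n)
    (hn : qPochhammer x n ≠ 0) :
    qBinomial x n r = qPochhammer x n / (qPochhammer x (n - r) * qPochhammer x r) := by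
  obtain ⟨s, rfl⟩ := Nat.exists_eq_add_of_le hr
  have h := qBinomial_add_mul_qPochhammer x r s
  rw [Nat.add_sub_cancel_left, mul_comm (qPochhammer x s)]
  exact eq_div_of_mul_eq (right_ne_zero_of_mul (h ▸ hn)) h

end QBinomial

section Euler

variable {𝕜 : Type*} [NormedField 𝕜] {x v : 𝕜}

noncomputable def qExp (x v : 𝕜) : 𝕜 := ∑' e : ℕ, v ^ e / qPochhammer x e

lemma one_sub_pow_ne_zero (hx : ‖x‖ < 1) {n : ℕ} (hn : n ≠ 0) : 1 - x ^ n ≠ 0 := by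
  refine sub_ne_zero.2 fun h => ?_
  have := congrArg norm h
  rw [norm_one, norm_pow] at this
  exact (pow_lt_one₀ (norm_nonneg x) hx hn).ne' this

lemma qPochhammer_ne_zero (hx : ‖x‖ < 1) (n : ℕ) : qPochhammer x n ≠ 0 :=
  prod_ne_zero_iff.2 fun _ _ => one_sub_pow_ne_zero hx (Nat.succ_ne_zero _)

lemma pow_succ_div_qPochhammer_succ (x v : 𝕜) (e : ℕ) :
    v ^ (e + 1) / qPochhammer x (e + 1) = v ^ e / qPochhammer x e * (v / (1 - x ^ (e + 1))) := by
  rw [qPochhammer_succ, pow_succ, mul_div_mul_comm]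

lemma summable_norm_qExp_term (hx : ‖x‖ < 1) (hv : ‖v‖ < 1) :
    Summable fun e : ℕ => ‖v ^ e / qPochhammer x e‖ := by
  obtain ⟨r, hvr, hr⟩ := exists_between hv
  have hratio : Tendsto (fun n : ℕ => ‖v‖ / ‖1 - x ^ (n + 1)‖) atTop (𝓝 (‖v‖ / ‖(1 : 𝕜) - 0‖)) :=
    tendsto_const_nhds.div (tendsto_const_nhds.sub
      ((tendsto_pow_atTop_nhds_zero_of_norm_lt_one hx).comp (tendsto_add_atTop_nat 1))).norm
      (by simp)
  rw [sub_zero, norm_one, div_one] at hratio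
  refine summable_of_ratio_norm_eventually_le hr ?_
  filter_upwards [hratio.eventually_le_const hvr] with n hn
  rw [norm_norm, norm_norm, pow_succ_div_qPochhammer_succ, norm_mul, mul_comm]
  exact mul_le_mul_of_nonneg_right (by rwa [norm_div]) (norm_nonneg _)

lemma norm_pow_mul_le (hx : ‖x‖ ≤ 1) (n : ℕ) (v : 𝕜) : ‖x ^ n * v‖ ≤ ‖v‖ := by
  rw [norm_mul, norm_pow]
  exact mul_le_of_le_one_left (norm_nonneg v) (pow_le_one₀ (norm_nonneg x) hx)

lemma qExp_zero_right (x : 𝕜) : qExp x 0 = 1 := by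
  rw [qExp, tsum_eq_single 0 fun e he => by simp [he]]
  simp

variable [CompleteSpace 𝕜]

lemma qExp_mul_left (hx : ‖x‖ < 1) (hv : ‖v‖ < 1) : qExp x (x * v) = (1 - v) * qExp x v := by
  have hs := (summable_norm_qExp_term hx hv).of_norm
  have hs' := (summable_norm_qExp_term hx
    ((by simpa using norm_pow_mul_le hx.le 1 v : ‖x * v‖ ≤ ‖v‖).trans_lt hv)).of_norm
  have hterm (e : ℕ) : v ^ (e + 1) / qPochhammer x (e + 1) -
      (x * v) ^ (e + 1) / qPochhammer x (e + 1) = v * (v ^ e / qPochhammer x e) := by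
    have := one_sub_pow_ne_zero hx (Nat.succ_ne_zero e)
    have := qPochhammer_ne_zero hx e
    rw [qPochhammer_succ]
    field_simp
    ring
  have : qExp x v - qExp x (x * v) = v * qExp x v := by
    rw [qExp, qExp, ← hs.tsum_sub hs', (hs.sub hs').tsum_eq_zero_add]
    simp only [pow_zero, sub_self, zero_add, hterm, tsum_mul_left]
  linear_combination -this

lemma qExp_pow_mul (hx : ‖x‖ < 1) (hv : ‖v‖ < 1) (N : ℕ) :
    qExp x (x ^ N * v) = qExp x v * ∏ k ∈ range N, (1 - x ^ k * v) := by
  induction N with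
  | zero => simp
  | succ N ih =>
    rw [pow_succ', mul_assoc, qExp_mul_left hx ((norm_pow_mul_le hx.le N v).trans_lt hv), ih,
      prod_range_succ]
    ring

lemma tendsto_qExp_pow_mul (hx : ‖x‖ < 1) (hv : ‖v‖ < 1) :
    Tendsto (fun N : ℕ => qExp x (x ^ N * v)) atTop (𝓝 1) := by
  rw [← qExp_zero_right x]
  refine tendsto_tsum_of_dominated_convergence (summable_norm_qExp_term hx hv) (fun e => ?_)
    (Eventually.of_forall fun N e => ?_)
  · simpa using (((tendsto_pow_atTop_nhds_zero_of_norm_lt_one hx).mul_const v).pow e).div_const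
      (qPochhammer x e)
  · rw [norm_div, norm_div, norm_pow, norm_pow]
    gcongr
    exact norm_pow_mul_le hx.le N v

lemma multipliable_one_sub_pow_mul (hx : ‖x‖ < 1) (v : 𝕜) :
    Multipliable fun k : ℕ => 1 - x ^ k * v := by
  simp_rw [sub_eq_add_neg]
  refine multipliable_one_add_of_summable ?_
  simpa [norm_pow] using (summable_geometric_of_lt_one (norm_nonneg x) hx).mul_right ‖v‖

theorem hasProd_inv_one_sub_pow_mul (hx : ‖x‖ < 1) (hv : ‖v‖ < 1) :
    HasProd (fun k : ℕ => (1 - x ^ k * v)⁻¹) (qExp x v) := by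
  have hP := (multipliable_one_sub_pow_mul hx v).hasProd
  have h : qExp x v * ∏' k : ℕ, (1 - x ^ k * v) = 1 :=
    tendsto_nhds_unique ((hP.tendsto_prod_nat.const_mul _).congr fun N =>
      (qExp_pow_mul hx hv N).symm) (tendsto_qExp_pow_mul hx hv)
  simpa [eq_inv_of_mul_eq_one_left h] using hP.inv₀ (right_ne_zero_of_mul_eq_one h)

end Euler

namespace Stmt15

lemma qpoch_eq_qPochhammer (q : ℝ) (n : ℕ) : qpoch q n = qPochhammer q⁻¹ n := by
  refine prod_congr rfl fun i _ => ?_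
  rw [inv_pow, ← zpow_natCast, ← zpow_neg]
  push_cast
  rfl

lemma two_mul_cast_choose_two (r : ℕ) : 2 * (r.choose 2 : ℤ) = r * (r - 1) := by
  have h : 2 * (r.choose 2 : ℚ) = r * (r - 1) := by rw [Nat.cast_choose_two]; ring
  exact_mod_cast h

theorem sum_qpoch_ratio_eq_prod {q : ℝ} (hq : q ≠ 0) {z : ℕ} (hz : qpoch q z ≠ 0) (u : ℕ) :
    ∑ r ∈ range (z + 1), (-1 : ℝ) ^ r *
        q ^ ((r : ℤ) * ((r : ℤ) - 1) / 2 - (u : ℤ) * (r : ℤ) + (z : ℤ) * (r : ℤ) - (r : ℤ) ^ 2) *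
        qpoch q z / (qpoch q (z - r) * qpoch q r)
      = ∏ k ∈ range z, (1 - q ^ ((k : ℤ) - (u : ℤ))) := by
  rw [qpoch_eq_qPochhammer] at hz
  calc _ = ∑ r ∈ range (z + 1),
        q⁻¹ ^ r.choose 2 * qBinomial q⁻¹ z r * (-q ^ ((z : ℤ) - u - 1)) ^ r := by
        refine sum_congr rfl fun r hr => ?_
        have hexp : (r : ℤ) * ((r : ℤ) - 1) / 2 - u * r + z * r - r ^ 2 =
            -(r.choose 2 : ℤ) + ((z : ℤ) - u - 1) * r := by
          rw [← two_mul_cast_choose_two, Int.mul_ediv_cancel_left _ two_ne_zero]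
          linear_combination two_mul_cast_choose_two r
        rw [qBinomial_eq_div (Nat.lt_succ_iff.1 (mem_range.1 hr)) hz, ← qpoch_eq_qPochhammer,
          ← qpoch_eq_qPochhammer, ← qpoch_eq_qPochhammer, hexp, zpow_add₀ hq, zpow_neg, zpow_mul,
          zpow_natCast, zpow_natCast, inv_pow, neg_pow]
        ring
    _ = ∏ k ∈ range z, (1 + q⁻¹ ^ k * -q ^ ((z : ℤ) - u - 1)) :=
        (prod_one_add_pow_mul _ _ _).symm
    _ = ∏ k ∈ range z, (1 - q ^ (((z - 1 - k : ℕ) : ℤ) - u)) := by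
        refine prod_congr rfl fun k hk => ?_
        have hk := mem_range.1 hk
        rw [mul_neg, ← sub_eq_add_neg, inv_pow, ← zpow_natCast, ← zpow_neg, ← zpow_add₀ hq]
        congr 2
        push_cast [Nat.cast_sub (by omega : k ≤ z - 1), Nat.cast_sub (by omega : 1 ≤ z)]
        ring
    _ = _ := prod_range_reflect (fun k => 1 - q ^ ((k : ℤ) - u)) z

lemma neg_one_pow_mul_rpow {q : ℝ} (hq : 0 ≤ q) (c u : ℝ) (e : ℕ) :
    (-1 : ℝ) ^ e * q ^ (-c * e - u * e) = (-q ^ (-(c + u))) ^ e := by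
  rw [neg_pow (q ^ _), show -c * e - u * e = -(c + u) * e by ring, Real.rpow_mul hq,
    Real.rpow_natCast]

lemma one_add_rpow_eq {q : ℝ} (hq : 0 < q) (c u : ℝ) (k : ℕ) :
    1 + q ^ (-(k : ℝ) - c - u) = 1 - q⁻¹ ^ k * -q ^ (-(c + u)) := by
  rw [show -(k : ℝ) - c - u = -k + -(c + u) by ring, Real.rpow_add hq, Real.rpow_neg hq.le,
    Real.rpow_natCast, inv_pow]
  ring

end Stmt15

open Stmt15 in
/-- For real `q ≥ 2`, `ε ∈ {−1,0,1}`, and nonnegative integers `z, u` with `u > 0`: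
`(∑_{e=0}^∞ (−1)^e q^{−(ε+1)e/2 − ue}/(q)_e) ·
 (∑_{r=0}^{z} (−1)^r q^{r(r−1)/2 − ur + zr − r²} (q)_z/((q)_{z−r}(q)_r))
 = ∏_{k=0}^∞ (1 + q^{−k−(ε+1)/2−u})^{−1} · ∏_{k=0}^{z−1} (1 − q^{k−u})`,
with the series absolutely convergent and the infinite product convergent. -/
theorem stmt_15 (q : ℝ) (hq : 2 ≤ q) (ε : ℤ) (hε : ε = -1 ∨ ε = 0 ∨ ε = 1)
    (z u : ℕ) (hu : 0 < u) :
    (Summable fun e : ℕ =>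
      |(-1 : ℝ) ^ e * q ^ (-(((ε : ℝ) + 1) / 2) * (e : ℝ) - (u : ℝ) * (e : ℝ)) /
        qpoch q e|) ∧
    (Multipliable fun k : ℕ =>
      (1 + q ^ (-(k : ℝ) - ((ε : ℝ) + 1) / 2 - (u : ℝ)))⁻¹) ∧
    (∑' e : ℕ,
        (-1 : ℝ) ^ e * q ^ (-(((ε : ℝ) + 1) / 2) * (e : ℝ) - (u : ℝ) * (e : ℝ)) /
          qpoch q e) *
      (∑ r ∈ Finset.range (z + 1),
        (-1 : ℝ) ^ r *
          q ^ ((r : ℤ) * ((r : ℤ) - 1) / 2 - (u : ℤ) * (r : ℤ) + (z : ℤ) * (r : ℤ)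
                - (r : ℤ) ^ 2) *
          qpoch q z / (qpoch q (z - r) * qpoch q r))
    = (∏' k : ℕ, (1 + q ^ (-(k : ℝ) - ((ε : ℝ) + 1) / 2 - (u : ℝ)))⁻¹) *
      ∏ k ∈ Finset.range z, (1 - q ^ ((k : ℤ) - (u : ℤ))) := by
  have hq1 : 1 < q := by linarith
  have hx : ‖q⁻¹‖ < 1 := by
    rw [norm_inv, Real.norm_of_nonneg (by positivity)]
    exact inv_lt_one_of_one_lt₀ hq1
  have hc : 0 < ((ε : ℝ) + 1) / 2 + u := by
    have : (-1 : ℝ) ≤ ε := by rcases hε with h | h | h <;> simp [h]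
    have : (1 : ℝ) ≤ u := by exact_mod_cast hu
    linarith
  have hv : ‖-q ^ (-(((ε : ℝ) + 1) / 2 + u))‖ < 1 := by
    rw [norm_neg, Real.norm_of_nonneg (by positivity)]
    exact Real.rpow_lt_one_of_one_lt_of_neg hq1 (neg_neg_of_pos hc)
  have hprod := hasProd_inv_one_sub_pow_mul hx hv
  rw [sum_qpoch_ratio_eq_prod (by positivity)
    (qpoch_eq_qPochhammer q z ▸ qPochhammer_ne_zero hx z)]
  simp only [neg_one_pow_mul_rpow (by positivity : 0 ≤ q), one_add_rpow_eq (by positivity : 0 < q),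
    qpoch_eq_qPochhammer]
  exact ⟨summable_norm_qExp_term hx hv, hprod.multipliable, by rw [hprod.tprod_eq]; rfl⟩
end
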